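/- arXiv:2302.01463 — 6 statements merged into one kernel-verified Lean document; each statement's English description precedes it below -/
import Mathlib

section
/- Let f : R^d → R be differentiable and L-smooth. For any points x, x̃ ∈ R^d and stepsize γ > 0, defining x̃' = x̃ − γ∇f(x), one has f(x̃') ≤ f(x̃) − (γ/2)‖∇f(x̃)‖² − (γ/2)(1 − Lγ)‖∇f(x)‖² + (γL²/2)‖x − x̃‖². -/
/-!
The descent lemma `f y ≤ f x + ⟪∇f x, y - x⟫ + (L/2)‖y - x‖²` at `y = x̃ - γ ∇f(x)` gives
`f x̃' ≤ f x̃ - γ⟪∇f x̃, ∇f x⟫ + (Lγ²/2)‖∇f x‖²`. Polarization rewrites the cross term as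
`(γ/2)(‖∇f x̃ - ∇f x‖² - ‖∇f x̃‖² - ‖∇f x‖²)`, and smoothness bounds `‖∇f x̃ - ∇f x‖²` by
`L²‖x - x̃‖²`.
-/

open scoped RealInnerProductSpace

section DescentLemma

variable {F : Type*} [NormedAddCommGroup F] [InnerProductSpace ℝ F] [CompleteSpace F]
  {f : F → ℝ} {g : F → F} {L : ℝ}

theorem HasGradientAt.hasDerivAt_comp_add_smul {f' x v : F} {t : ℝ}
    (h : HasGradientAt f f' (x + t • v)) :
    HasDerivAt (fun s : ℝ ↦ f (x + s • v)) ⟪f', v⟫ t := by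
  have hline : HasDerivAt (fun s : ℝ ↦ x + s • v) v t := by
    simpa using ((hasDerivAt_id t).smul_const v).const_add x
  have hcomp := h.hasFDerivAt.comp_hasDerivAt t hline
  simp only [InnerProductSpace.toDual_apply_apply] at hcomp
  exact hcomp

theorem le_add_inner_add_sq_of_lipschitz_gradient (hgrad : ∀ x, HasGradientAt f (g x) x)
    (hsmooth : ∀ x y, ‖g x - g y‖ ≤ L * ‖x - y‖) (x y : F) :
    f y ≤ f x + ⟪g x, y - x⟫ + L / 2 * ‖y - x‖ ^ 2 := by
  set v := y - x
  -- `f` minus the quadratic model along the segment has nonpositive derivative, since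
  -- `⟪g (x + t • v) - g x, v⟫ ≤ L t ‖v‖²`.
  let φ : ℝ → ℝ := fun t ↦ f (x + t • v) - t * ⟪g x, v⟫ - L / 2 * t ^ 2 * ‖v‖ ^ 2
  let φ' : ℝ → ℝ := fun t ↦ ⟪g (x + t • v) - g x, v⟫ - L * t * ‖v‖ ^ 2
  have hφ : ∀ t, HasDerivAt φ (φ' t) t := by
    intro t
    have hquad := ((hasDerivAt_pow 2 t).const_mul (L / 2)).mul_const (‖v‖ ^ 2)
    refine (((hgrad (x + t • v)).hasDerivAt_comp_add_smul.sub
      ((hasDerivAt_id t).mul_const ⟪g x, v⟫)).sub hquad).congr_deriv ?_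
    simp only [φ', inner_sub_left]
    push_cast
    ring
  have hφ'_nonpos : ∀ t ∈ interior (Set.Icc (0 : ℝ) 1), φ' t ≤ 0 := by
    intro t ht
    rw [interior_Icc] at ht
    have hlip : ‖g (x + t • v) - g x‖ ≤ L * (t * ‖v‖) := by
      simpa [norm_smul, abs_of_pos ht.1] using hsmooth (x + t • v) x
    refine sub_nonpos.mpr ?_
    calc ⟪g (x + t • v) - g x, v⟫ ≤ ‖g (x + t • v) - g x‖ * ‖v‖ := real_inner_le_norm _ _
      _ ≤ L * (t * ‖v‖) * ‖v‖ := by gcongr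
      _ = L * t * ‖v‖ ^ 2 := by ring
  have hanti : AntitoneOn φ (Set.Icc 0 1) :=
    antitoneOn_of_hasDerivWithinAt_nonpos (convex_Icc 0 1)
      (fun t _ ↦ (hφ t).continuousAt.continuousWithinAt)
      (fun t _ ↦ (hφ t).hasDerivWithinAt) hφ'_nonpos
  have h01 : φ 1 ≤ φ 0 := hanti (by simp) (by simp) zero_le_one
  norm_num [φ, v] at h01
  linarith

end DescentLemma

theorem virtual_descent_step_general
    (d : ℕ) (f : EuclideanSpace ℝ (Fin d) → ℝ)
    (g : EuclideanSpace ℝ (Fin d) → EuclideanSpace ℝ (Fin d))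
    (hgrad : ∀ x, HasGradientAt f (g x) x)
    (L : ℝ)
    (hsmooth : ∀ x y, ‖g x - g y‖ ≤ L * ‖x - y‖)
    (γ : ℝ) (hγ : 0 < γ)
    (x xt : EuclideanSpace ℝ (Fin d)) :
    f (xt - γ • g x) ≤
      f xt - (γ / 2) * ‖g xt‖ ^ 2 - (γ / 2) * (1 - L * γ) * ‖g x‖ ^ 2
        + (γ * L ^ 2 / 2) * ‖x - xt‖ ^ 2 := by
  have hdescent := le_add_inner_add_sq_of_lipschitz_gradient hgrad hsmooth xt (xt - γ • g x)
  rw [sub_sub_cancel_left, inner_neg_right, real_inner_smul_right, norm_neg, norm_smul,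
    Real.norm_eq_abs, mul_pow, sq_abs] at hdescent
  have hpolar : ‖g xt - g x‖ ^ 2 = ‖g xt‖ ^ 2 - 2 * ⟪g xt, g x⟫ + ‖g x‖ ^ 2 :=
    norm_sub_sq_real _ _
  have hlip : ‖g xt - g x‖ ^ 2 ≤ L ^ 2 * ‖x - xt‖ ^ 2 := by
    rw [← mul_pow, norm_sub_rev x]
    exact pow_le_pow_left₀ (norm_nonneg _) (hsmooth xt x) 2
  nlinarith [mul_le_mul_of_nonneg_left hlip hγ.le]

/-- One-step descent inequality for the virtual sequence: if `f` is differentiable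
with gradient `g` and `L`-smooth, then for `x̃' = x̃ − γ • g x`,
`f x̃' ≤ f x̃ − (γ/2)‖g x̃‖² − (γ/2)(1 − Lγ)‖g x‖² + (γL²/2)‖x − x̃‖²`. -/
theorem virtual_descent_step
    (d : ℕ) (f : EuclideanSpace ℝ (Fin d) → ℝ)
    (g : EuclideanSpace ℝ (Fin d) → EuclideanSpace ℝ (Fin d))
    (hgrad : ∀ x, HasGradientAt f (g x) x)
    (L : ℝ) (hL : 0 < L)
    (hsmooth : ∀ x y, ‖g x - g y‖ ≤ L * ‖x - y‖)
    (γ : ℝ) (hγ : 0 < γ)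
    (x xt : EuclideanSpace ℝ (Fin d)) :
    f (xt - γ • g x) ≤
      f xt - (γ / 2) * ‖g xt‖ ^ 2 - (γ / 2) * (1 - L * γ) * ‖g x‖ ^ 2
        + (γ * L ^ 2 / 2) * ‖x - xt‖ ^ 2 :=
  virtual_descent_step_general d f g hgrad L hsmooth γ hγ x xt
end

section
/- Consider perturbed gradient descent on f(x) = (L/2)‖x‖² in R^d with iterates x_{t+1} = (1 − γL)x_t − γ z_{t+1}, where z_t are independent mean-zero random vectors with E‖z_t‖² = σ². If γL < 1 and T ≥ (log 2)/(γL), then E[f(x_T)] − f* ≥ (L/2)(1 − γL)^{2T}‖x_0‖² + (1/8)γσ². -/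
/-!
Unrolling the recursion, `x_T = (1 - γL)^T x₀ - γ ∑_{s<T} (1 - γL)^s z_{T-s}` is a deterministic
vector plus a sum of pairwise independent mean-zero terms. Such terms are orthogonal in `L²`, so
`E‖x_T‖² = (1 - γL)^{2T} ‖x₀‖² + γ²σ² ∑_{s<T} (1 - γL)^{2s}`. The choice of `T` forces
`(1 - γL)^T ≤ 1/2`, so the geometric sum is at least half of `1 / (1 - (1 - γL)²) ≥ 1 / (2γL)`,
which yields the noise term `γσ²/8`.
-/

open MeasureTheory ProbabilityTheory Finset
open scoped InnerProductSpace

theorem eq_pow_smul_add_sum_of_succ_eq {R M : Type*} [Monoid R] [AddCommMonoid M]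
    [DistribMulAction R M] {x b : ℕ → M} {a : R} (h : ∀ t, x (t + 1) = a • x t + b (t + 1))
    (t : ℕ) : x t = a ^ t • x 0 + ∑ s ∈ range t, a ^ s • b (t - s) := by
  induction t with
  | zero => simp
  | succ t ih =>
    rw [h, ih, sum_range_succ', smul_add, smul_sum, smul_smul, ← pow_succ']
    simp only [smul_smul, ← pow_succ', Nat.add_sub_add_right, pow_zero, one_smul, Nat.sub_zero,
      add_assoc]

section
variable {Ω E : Type*} [MeasurableSpace Ω] {μ : Measure Ω}
  [NormedAddCommGroup E] [InnerProductSpace ℝ E]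

theorem MeasureTheory.MemLp.integrable_inner {X Y : Ω → E} (hX : MemLp X 2 μ)
    (hY : MemLp Y 2 μ) : Integrable (fun ω => ⟪X ω, Y ω⟫_ℝ) μ := by
  refine (hX.norm.integrable_mul hY.norm).mono (hX.1.inner hY.1) ?_
  filter_upwards with ω
  simpa using abs_real_inner_le_norm (X ω) (Y ω)

theorem integral_norm_add_sq {X Y : Ω → E} (hX : MemLp X 2 μ) (hY : MemLp Y 2 μ) :
    ∫ ω, ‖X ω + Y ω‖ ^ 2 ∂μ
      = ∫ ω, ‖X ω‖ ^ 2 ∂μ + 2 * ∫ ω, ⟪X ω, Y ω⟫_ℝ ∂μ + ∫ ω, ‖Y ω‖ ^ 2 ∂μ := by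
  have hXX := (memLp_two_iff_integrable_sq_norm hX.1).1 hX
  have hYY := (memLp_two_iff_integrable_sq_norm hY.1).1 hY
  have hXY := (hX.integrable_inner hY).const_mul 2
  simp_rw [norm_add_sq_real]
  rw [integral_add (f := fun ω => ‖X ω‖ ^ 2 + 2 * ⟪X ω, Y ω⟫_ℝ) (hXX.add hXY) hYY,
    integral_add hXX hXY, integral_const_mul]

theorem integral_norm_const_add_sq [IsProbabilityMeasure μ] [CompleteSpace E] (a : E) {S : Ω → E}
    (hS : MemLp S 2 μ) (hmean : μ[S] = 0) :
    ∫ ω, ‖a + S ω‖ ^ 2 ∂μ = ‖a‖ ^ 2 + ∫ ω, ‖S ω‖ ^ 2 ∂μ := by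
  rw [integral_norm_add_sq (memLp_const a) hS, integral_inner (hS.integrable one_le_two), hmean]
  simp

variable [CompleteSpace E] [MeasurableSpace E] [BorelSpace E]

theorem ProbabilityTheory.IndepFun.integral_inner_eq {X Y : Ω → E} (h : X ⟂ᵢ[μ] Y)
    (hX : Integrable X μ) (hY : Integrable Y μ) : ∫ ω, ⟪X ω, Y ω⟫_ℝ ∂μ = ⟪μ[X], μ[Y]⟫_ℝ :=
  h.integral_bilin hX hY (innerSL ℝ)

theorem integral_norm_sum_sq_of_pairwise_indepFun [IsFiniteMeasure μ] {ι : Type*}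
    (s : Finset ι) {Y : ι → Ω → E} (hY : ∀ i ∈ s, MemLp (Y i) 2 μ)
    (hindep : (s : Set ι).Pairwise fun i j => Y i ⟂ᵢ[μ] Y j) (hmean : ∀ i ∈ s, μ[Y i] = 0) :
    ∫ ω, ‖∑ i ∈ s, Y i ω‖ ^ 2 ∂μ = ∑ i ∈ s, ∫ ω, ‖Y i ω‖ ^ 2 ∂μ := by
  classical
  induction s using Finset.induction_on with
  | empty => simp
  | insert i s hi ih =>
    have hYi := hY i (mem_insert_self i s)
    have hYs : ∀ j ∈ s, MemLp (Y j) 2 μ := fun j hj => hY j (mem_insert_of_mem hj)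
    have horth : ∫ ω, ⟪∑ j ∈ s, Y j ω, Y i ω⟫_ℝ ∂μ = 0 := by
      simp_rw [sum_inner]
      rw [integral_finsetSum _ fun j hj => (hYs j hj).integrable_inner hYi]
      refine sum_eq_zero fun j hj => ?_
      have hji : j ≠ i := fun h => hi (h ▸ hj)
      rw [(hindep (by simp [hj]) (by simp) hji).integral_inner_eq
        ((hYs j hj).integrable one_le_two) (hYi.integrable one_le_two),
        hmean i (mem_insert_self i s), inner_zero_right]
    simp_rw [sum_insert hi, add_comm (Y i _)]
    have hS : MemLp (fun ω => ∑ j ∈ s, Y j ω) 2 μ := memLp_finsetSum s hYs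
    rw [integral_norm_add_sq hS hYi, horth,
      ih hYs (hindep.mono (coe_subset.2 (subset_insert i s)))
        fun j hj => hmean j (mem_insert_of_mem hj)]
    ring

theorem integral_norm_sq_of_eq_smul_sub_smul [IsProbabilityMeasure μ] {z x : ℕ → Ω → E}
    {r γ σ : ℝ} (hindep : Pairwise fun s t => z s ⟂ᵢ[μ] z t) (hL2 : ∀ t, MemLp (z t) 2 μ)
    (hmean : ∀ t, 1 ≤ t → ∫ ω, z t ω ∂μ = 0)
    (hvar : ∀ t, 1 ≤ t → ∫ ω, ‖z t ω‖ ^ 2 ∂μ = σ ^ 2) {x0 : E} (hx0 : ∀ ω, x 0 ω = x0)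
    (hrec : ∀ t ω, x (t + 1) ω = r • x t ω - γ • z (t + 1) ω) (T : ℕ) :
    ∫ ω, ‖x T ω‖ ^ 2 ∂μ = r ^ (2 * T) * ‖x0‖ ^ 2 + γ ^ 2 * σ ^ 2 * ∑ s ∈ range T, (r ^ 2) ^ s := by
  set Y : ℕ → Ω → E := fun s ω => r ^ s • -(γ • z (T - s) ω)
  have hclosed : ∀ ω, x T ω = r ^ T • x0 + ∑ s ∈ range T, Y s ω := fun ω => by
    rw [← hx0 ω]
    exact eq_pow_smul_add_sum_of_succ_eq (x := fun t => x t ω) (b := fun t => -(γ • z t ω))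
      (fun t => by rw [hrec, sub_eq_add_neg]) T
  have hY : ∀ s ∈ range T, MemLp (Y s) 2 μ := fun s _ => ((hL2 _).const_smul γ).neg.const_smul _
  have hYmean : ∀ s ∈ range T, μ[Y s] = 0 := fun s hs => by
    simp only [Y, integral_smul, integral_neg, hmean (T - s) (by simp at hs; omega), smul_zero,
      neg_zero]
  have hYindep : (range T : Set ℕ).Pairwise fun i j => Y i ⟂ᵢ[μ] Y j := fun i hi j hj hij => by
    simp only [coe_range, Set.mem_Iio] at hi hj
    exact (hindep (by omega : T - i ≠ T - j)).comp (φ := fun v => r ^ i • -(γ • v))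
      (ψ := fun v => r ^ j • -(γ • v)) (by fun_prop) (by fun_prop)
  have hYvar : ∀ s ∈ range T, ∫ ω, ‖Y s ω‖ ^ 2 ∂μ = γ ^ 2 * σ ^ 2 * (r ^ 2) ^ s := fun s hs => by
    simp only [Y, norm_smul, norm_neg, mul_pow, Real.norm_eq_abs, sq_abs, integral_const_mul,
      hvar (T - s) (by simp at hs; omega)]
    ring
  have hSmean : ∫ ω, ∑ s ∈ range T, Y s ω ∂μ = 0 := by
    rw [integral_finsetSum _ fun s hs => (hY s hs).integrable one_le_two]
    exact sum_eq_zero hYmean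
  calc ∫ ω, ‖x T ω‖ ^ 2 ∂μ = ∫ ω, ‖r ^ T • x0 + ∑ s ∈ range T, Y s ω‖ ^ 2 ∂μ := by
        simp_rw [hclosed]
    _ = ‖r ^ T • x0‖ ^ 2 + ∑ s ∈ range T, ∫ ω, ‖Y s ω‖ ^ 2 ∂μ := by
        have hS : MemLp (fun ω => ∑ s ∈ range T, Y s ω) 2 μ := memLp_finsetSum _ hY
        rw [integral_norm_const_add_sq _ hS hSmean,
          integral_norm_sum_sq_of_pairwise_indepFun _ hY hYindep hYmean]
    _ = r ^ (2 * T) * ‖x0‖ ^ 2 + γ ^ 2 * σ ^ 2 * ∑ s ∈ range T, (r ^ 2) ^ s := by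
        rw [sum_congr rfl hYvar, ← mul_sum, norm_smul, mul_pow, Real.norm_eq_abs, sq_abs, pow_mul',
          pow_two]

end

theorem one_sub_pow_le_half {c : ℝ} (hc0 : 0 < c) (hc1 : c ≤ 1) {T : ℕ}
    (hT : Real.log 2 / c ≤ T) : (1 - c) ^ T ≤ 1 / 2 :=
  calc (1 - c) ^ T ≤ Real.exp (-c) ^ T :=
        pow_le_pow_left₀ (by linarith) (Real.one_sub_le_exp_neg c) T
    _ = Real.exp (-(c * T)) := by rw [← Real.exp_nat_mul]; ring_nf
    _ ≤ Real.exp (-Real.log 2) := Real.exp_le_exp.2 (by linarith [(div_le_iff₀' hc0).1 hT])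
    _ = 1 / 2 := by rw [Real.exp_neg, Real.exp_log two_pos, one_div]

theorem one_div_four_mul_le_geom_sum_one_sub_sq {c : ℝ} (hc0 : 0 < c) (hc1 : c ≤ 1) {T : ℕ}
    (hT : Real.log 2 / c ≤ T) : 1 / (4 * c) ≤ ∑ s ∈ range T, ((1 - c) ^ 2) ^ s := by
  have hpow : ((1 - c) ^ 2) ^ T ≤ 1 / 2 := by
    have := one_sub_pow_le_half hc0 hc1 hT
    rw [← pow_mul, mul_comm, pow_mul]
    nlinarith [pow_nonneg (sub_nonneg.2 hc1) T]
  have hgeom := geom_sum_mul_neg ((1 - c) ^ 2) T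
  have hsum : 0 ≤ ∑ s ∈ range T, ((1 - c) ^ 2) ^ s := sum_nonneg fun s _ => by positivity
  rw [div_le_iff₀ (by positivity)]
  nlinarith

theorem pgd_noise_lower_bound_general
    {Ω : Type*} [MeasurableSpace Ω] (μ : Measure Ω) [IsProbabilityMeasure μ]
    (d : ℕ) (γ L σ : ℝ) (hγ : 0 < γ) (hL : 0 < L) (h1 : γ * L < 1)
    (f : EuclideanSpace ℝ (Fin d) → ℝ)
    (hf : ∀ y, f y = (L / 2) * ‖y‖ ^ 2)
    (z : ℕ → Ω → EuclideanSpace ℝ (Fin d))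
    (hindep : iIndepFun z μ)
    (hL2 : ∀ t, MemLp (z t) 2 μ)
    (hmean : ∀ t, 1 ≤ t → ∫ ω, z t ω ∂μ = 0)
    (hvar : ∀ t, 1 ≤ t → ∫ ω, ‖z t ω‖ ^ 2 ∂μ = σ ^ 2)
    (x0 : EuclideanSpace ℝ (Fin d)) (x : ℕ → Ω → EuclideanSpace ℝ (Fin d))
    (hx0 : ∀ ω, x 0 ω = x0)
    (hrec : ∀ t ω, x (t + 1) ω = (1 - γ * L) • x t ω - γ • z (t + 1) ω)
    (T : ℕ) (hT : (T : ℝ) ≥ Real.log 2 / (γ * L)) :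
    (L / 2) * ((1 - γ * L) ^ (2 * T) * ‖x0‖ ^ 2) + (1 / 8) * γ * σ ^ 2 ≤
      ∫ ω, f (x T ω) ∂μ - 0 := by
  have hγL : 0 < γ * L := mul_pos hγ hL
  have hmoment := integral_norm_sq_of_eq_smul_sub_smul (fun _ _ hst => hindep.indepFun hst)
    hL2 hmean hvar hx0 hrec T
  have hgeom := one_div_four_mul_le_geom_sum_one_sub_sq hγL h1.le hT
  have hnoise : (1 / 8) * γ * σ ^ 2 ≤
      (L / 2) * (γ ^ 2 * σ ^ 2 * ∑ s ∈ range T, ((1 - γ * L) ^ 2) ^ s) :=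
    calc (1 / 8) * γ * σ ^ 2 = (L / 2) * (γ ^ 2 * σ ^ 2 * (1 / (4 * (γ * L)))) := by
          field_simp; ring
      _ ≤ _ := by gcongr
  simp_rw [hf]
  rw [integral_const_mul, hmoment, sub_zero, mul_add]
  linarith

/-- Noise lower bound for PGD on `f(x) = (L/2)‖x‖²`: for iterates
`x_{t+1} = (1 − γL) x_t − γ z_{t+1}` with independent mean-zero noise of
second moment `σ²`, if `γL < 1` and `T ≥ log 2/(γL)` then
`E[f(x_T)] − f* ≥ (L/2)(1 − γL)^{2T}‖x_0‖² + γσ²/8` (here `f* = 0`). -/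
theorem pgd_noise_lower_bound
    {Ω : Type*} [MeasurableSpace Ω] (μ : Measure Ω) [IsProbabilityMeasure μ]
    (d : ℕ) (γ L σ : ℝ) (hγ : 0 < γ) (hL : 0 < L) (h1 : γ * L < 1) (hσ : 0 ≤ σ)
    (f : EuclideanSpace ℝ (Fin d) → ℝ)
    (hf : ∀ y, f y = (L / 2) * ‖y‖ ^ 2)
    (z : ℕ → Ω → EuclideanSpace ℝ (Fin d))
    (hmeas : ∀ t, Measurable (z t))
    (hindep : iIndepFun z μ)
    (hL2 : ∀ t, MemLp (z t) 2 μ)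
    (hmean : ∀ t, 1 ≤ t → ∫ ω, z t ω ∂μ = 0)
    (hvar : ∀ t, 1 ≤ t → ∫ ω, ‖z t ω‖ ^ 2 ∂μ = σ ^ 2)
    (x0 : EuclideanSpace ℝ (Fin d)) (x : ℕ → Ω → EuclideanSpace ℝ (Fin d))
    (hx0 : ∀ ω, x 0 ω = x0)
    (hrec : ∀ t ω, x (t + 1) ω = (1 - γ * L) • x t ω - γ • z (t + 1) ω)
    (T : ℕ) (hT : (T : ℝ) ≥ Real.log 2 / (γ * L)) :
    (L / 2) * ((1 - γ * L) ^ (2 * T) * ‖x0‖ ^ 2) + (1 / 8) * γ * σ ^ 2 ≤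
      ∫ ω, f (x T ω) ∂μ - 0 :=
  pgd_noise_lower_bound_general μ d γ L σ hγ hL h1 f hf z hindep hL2 hmean hvar x0 x hx0 hrec T hT
end

section
/- Consider anti-correlated perturbed gradient descent on f(x) = (L/2)‖x‖² in R^d with iterates x_{t+1} = (1 − γL)x_t − γ z_{t+1} + γ z_t (with z_0 = 0), where z_t are independent mean-zero random vectors with E‖z_t‖² = σ². Then for any T ≥ 1, E‖x_T‖² ≥ (1 − γL)^{2T}‖x_0‖² + γ²σ², and hence E[f(x_T)] − f* ≥ (L/2)[(1 − γL)^{2T}‖x_0‖² + γ²σ²]. -/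
open MeasureTheory ProbabilityTheory RealInnerProductSpace

/-! With `u t = x t + γ • z t` the anti-correlated noise telescopes:
`u (t + 1) = (1 - γL) • u t + γ²L • z t`, so `u T` is a function of `z 0, …, z (T - 1)` and is
independent of `z T`. Hence `x T = u T - γ • z T` has `E‖x T‖² = E‖u T‖² + γ²σ²`, and Jensen gives
`E‖u T‖² ≥ ‖E (u T)‖² = (1 - γL)^(2T) ‖x0‖²`. -/

section Independence

variable {Ω ι β β' : Type*} {mΩ : MeasurableSpace Ω} {μ : Measure Ω}
  [mβ : MeasurableSpace β] [MeasurableSpace β']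

lemma ProbabilityTheory.iIndepFun.indepFun_of_measurable_iSup_comap {z : ι → Ω → β}
    (hindep : iIndepFun z μ) (hz : ∀ i, Measurable (z i)) {S : Set ι} {j : ι} (hj : j ∉ S)
    {Y : Ω → β'} (hY : Measurable[⨆ i ∈ S, mβ.comap (z i)] Y) : IndepFun Y (z j) μ := by
  have hST := indep_iSup_of_disjoint (fun i => (hz i).comap_le) hindep.iIndep
    (Set.disjoint_singleton_right.2 hj)
  simp only [Set.mem_singleton_iff, iSup_iSup_eq_left] at hST
  exact (IndepFun_iff_Indep _ _ _).2 (indep_of_indep_of_le_left hST hY.comap_le)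

end Independence

section InnerProductSpace

variable {Ω E : Type*} {mΩ : MeasurableSpace Ω} {μ : Measure Ω} [IsProbabilityMeasure μ]
  [NormedAddCommGroup E] [InnerProductSpace ℝ E] [CompleteSpace E]

lemma sq_norm_integral_le_integral_sq_norm {X : Ω → E} (hX : MemLp X 2 μ) :
    ‖∫ ω, X ω ∂μ‖ ^ 2 ≤ ∫ ω, ‖X ω‖ ^ 2 ∂μ :=
  (convexOn_univ_norm.pow (fun _ _ => norm_nonneg _) 2).map_integral_le
    (continuous_norm.pow 2).continuousOn isClosed_univ (by simp)
    (hX.integrable one_le_two) hX.norm.integrable_sq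

variable [MeasurableSpace E] [BorelSpace E]

lemma integral_norm_sub_smul_sq_of_indepFun {X Y : Ω → E} (hXY : IndepFun X Y μ)
    (hX : MemLp X 2 μ) (hY : MemLp Y 2 μ) (hY0 : ∫ ω, Y ω ∂μ = 0) (c : ℝ) :
    ∫ ω, ‖X ω - c • Y ω‖ ^ 2 ∂μ = ∫ ω, ‖X ω‖ ^ 2 ∂μ + c ^ 2 * ∫ ω, ‖Y ω‖ ^ 2 ∂μ := by
  have hinner : Integrable (fun ω => ⟪X ω, Y ω⟫) μ :=
    hXY.integrable_bilin (hX.integrable one_le_two) (hY.integrable one_le_two) (innerSL ℝ)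
  have hcross : ∫ ω, ⟪X ω, Y ω⟫ ∂μ = 0 :=
    (hXY.integral_bilin (hX.integrable one_le_two) (hY.integrable one_le_two) (innerSL ℝ)).trans
      (by simp [hY0])
  have hexpand (ω : Ω) :
      ‖X ω - c • Y ω‖ ^ 2 = ‖X ω‖ ^ 2 - 2 * c * ⟪X ω, Y ω⟫ + c ^ 2 * ‖Y ω‖ ^ 2 := by
    rw [norm_sub_sq_real, real_inner_smul_right, norm_smul, mul_pow, Real.norm_eq_abs, sq_abs]
    ring
  have hX2 := hX.norm.integrable_sq
  have hY2 := hY.norm.integrable_sq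
  have hX2_sub : Integrable (fun ω => ‖X ω‖ ^ 2 - 2 * c * ⟪X ω, Y ω⟫) μ :=
    hX2.sub (hinner.const_mul _)
  simp_rw [hexpand]
  rw [integral_add hX2_sub (hY2.const_mul _), integral_sub hX2 (hinner.const_mul _),
    integral_const_mul, integral_const_mul, hcross]
  ring

end InnerProductSpace

section LinearRecursion

variable {Ω E : Type*} {mΩ : MeasurableSpace Ω} {μ : Measure Ω}
  [NormedAddCommGroup E] [NormedSpace ℝ E] {a c : ℝ} {u₀ : E} {z u : ℕ → Ω → E}

lemma memLp_of_linear_recursion [IsFiniteMeasure μ] {p : ENNReal} (hu₀ : ∀ ω, u 0 ω = u₀)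
    (hu : ∀ t ω, u (t + 1) ω = a • u t ω + c • z t ω) (hz : ∀ t, MemLp (z t) p μ) (t : ℕ) :
    MemLp (u t) p μ := by
  induction t with
  | zero => simpa [funext hu₀] using memLp_const u₀
  | succ t ih =>
    rw [funext (hu t)]
    exact (ih.const_smul a).add ((hz t).const_smul c)

lemma measurable_iSup_comap_of_linear_recursion [mE : MeasurableSpace E] [BorelSpace E]
    [SecondCountableTopology E] (hu₀ : ∀ ω, u 0 ω = u₀)
    (hu : ∀ t ω, u (t + 1) ω = a • u t ω + c • z t ω) (t : ℕ) :
    Measurable[⨆ s ∈ Set.Iio t, mE.comap (z s)] (u t) := by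
  induction t with
  | zero => simp [funext hu₀]
  | succ t ih =>
    have hpast : ⨆ s ∈ Set.Iio t, mE.comap (z s) ≤ ⨆ s ∈ Set.Iio (t + 1), mE.comap (z s) :=
      biSup_mono fun s hs => Nat.lt_succ_of_lt hs
    have hnow : mE.comap (z t) ≤ ⨆ s ∈ Set.Iio (t + 1), mE.comap (z s) :=
      le_iSup₂_of_le t (Nat.lt_succ_self t) le_rfl
    rw [funext (hu t)]
    exact ((ih.mono hpast le_rfl).const_smul a).add
      (((comap_measurable (z t)).mono hnow le_rfl).const_smul c)

lemma integral_of_linear_recursion [IsProbabilityMeasure μ] [CompleteSpace E]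
    (hu₀ : ∀ ω, u 0 ω = u₀)
    (hu : ∀ t ω, u (t + 1) ω = a • u t ω + c • z t ω) (hz : ∀ t, Integrable (z t) μ)
    (hz_mean : ∀ t, ∫ ω, z t ω ∂μ = 0) (t : ℕ) :
    ∫ ω, u t ω ∂μ = a ^ t • u₀ := by
  have hu_int (t : ℕ) : Integrable (u t) μ := memLp_one_iff_integrable.1 <|
    memLp_of_linear_recursion hu₀ hu (fun t => memLp_one_iff_integrable.2 (hz t)) t
  induction t with
  | zero => simp [hu₀]
  | succ t ih =>
    have hau : Integrable (fun ω => a • u t ω) μ := (hu_int t).smul a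
    have hcz : Integrable (fun ω => c • z t ω) μ := (hz t).smul c
    simp_rw [hu t]
    rw [integral_add hau hcz, integral_smul, integral_smul, ih,
      hz_mean, smul_zero, add_zero, smul_smul, pow_succ']

end LinearRecursion

theorem anti_pgd_noise_lower_bound_general
    {Ω : Type*} [MeasurableSpace Ω] (μ : Measure Ω) [IsProbabilityMeasure μ]
    (d : ℕ) (γ L σ : ℝ) (hL : 0 < L)
    (f : EuclideanSpace ℝ (Fin d) → ℝ)
    (hf : ∀ y, f y = (L / 2) * ‖y‖ ^ 2)
    (z : ℕ → Ω → EuclideanSpace ℝ (Fin d))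
    (hz0 : ∀ ω, z 0 ω = 0)
    (hmeas : ∀ t, Measurable (z t))
    (hindep : iIndepFun z μ)
    (hL2 : ∀ t, MemLp (z t) 2 μ)
    (hmean : ∀ t, 1 ≤ t → ∫ ω, z t ω ∂μ = 0)
    (hvar : ∀ t, 1 ≤ t → ∫ ω, ‖z t ω‖ ^ 2 ∂μ = σ ^ 2)
    (x0 : EuclideanSpace ℝ (Fin d)) (x : ℕ → Ω → EuclideanSpace ℝ (Fin d))
    (hx0 : ∀ ω, x 0 ω = x0)
    (hrec : ∀ t ω, x (t + 1) ω = (1 - γ * L) • x t ω - γ • z (t + 1) ω + γ • z t ω)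
    (T : ℕ) (hT : 1 ≤ T) :
    (1 - γ * L) ^ (2 * T) * ‖x0‖ ^ 2 + γ ^ 2 * σ ^ 2 ≤ ∫ ω, ‖x T ω‖ ^ 2 ∂μ ∧
      (L / 2) * ((1 - γ * L) ^ (2 * T) * ‖x0‖ ^ 2 + γ ^ 2 * σ ^ 2) ≤
        ∫ ω, f (x T ω) ∂μ - 0 := by
  set u : ℕ → Ω → EuclideanSpace ℝ (Fin d) := fun t ω => x t ω + γ • z t ω
  have hu₀ (ω : Ω) : u 0 ω = x0 := by simp [u, hx0, hz0]
  have hu (t : ℕ) (ω : Ω) : u (t + 1) ω = (1 - γ * L) • u t ω + (γ ^ 2 * L) • z t ω := by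
    simp only [u, hrec]
    module
  have hz_mean : ∀ t, ∫ ω, z t ω ∂μ = 0
    | 0 => by simp [hz0]
    | t + 1 => hmean (t + 1) (Nat.le_add_left 1 t)
  have hu_L2 : MemLp (u T) 2 μ := memLp_of_linear_recursion hu₀ hu hL2 T
  have hindep_uz : IndepFun (u T) (z T) μ :=
    hindep.indepFun_of_measurable_iSup_comap hmeas Set.self_notMem_Iio
      (measurable_iSup_comap_of_linear_recursion hu₀ hu T)
  have hx_norm : ∫ ω, ‖x T ω‖ ^ 2 ∂μ = ∫ ω, ‖u T ω‖ ^ 2 ∂μ + γ ^ 2 * σ ^ 2 := by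
    have hx : x T = fun ω => u T ω - γ • z T ω := by simp [u]
    rw [hx, integral_norm_sub_smul_sq_of_indepFun hindep_uz hu_L2 (hL2 T) (hz_mean T), hvar T hT]
  have hu_mean : ‖∫ ω, u T ω ∂μ‖ ^ 2 = (1 - γ * L) ^ (2 * T) * ‖x0‖ ^ 2 := by
    rw [integral_of_linear_recursion hu₀ hu (fun t => (hL2 t).integrable one_le_two) hz_mean,
      norm_smul, mul_pow, Real.norm_eq_abs, sq_abs, ← pow_mul, mul_comm T]
  have key : (1 - γ * L) ^ (2 * T) * ‖x0‖ ^ 2 + γ ^ 2 * σ ^ 2 ≤ ∫ ω, ‖x T ω‖ ^ 2 ∂μ := by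
    rw [hx_norm, ← hu_mean]
    gcongr
    exact sq_norm_integral_le_integral_sq_norm hu_L2
  refine ⟨key, ?_⟩
  simp_rw [hf, sub_zero]
  rw [integral_const_mul]
  exact mul_le_mul_of_nonneg_left key (half_pos hL).le

/-- Noise lower bound for Anti-PGD on `f(x) = (L/2)‖x‖²`: for iterates
`x_{t+1} = (1 − γL) x_t − γ z_{t+1} + γ z_t` with `z_0 = 0` and independent
mean-zero noise of second moment `σ²`, for any `T ≥ 1`,
`E‖x_T‖² ≥ (1 − γL)^{2T}‖x_0‖² + γ²σ²`, hence
`E[f(x_T)] − f* ≥ (L/2)[(1 − γL)^{2T}‖x_0‖² + γ²σ²]` (here `f* = 0`). -/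
theorem anti_pgd_noise_lower_bound
    {Ω : Type*} [MeasurableSpace Ω] (μ : Measure Ω) [IsProbabilityMeasure μ]
    (d : ℕ) (γ L σ : ℝ) (hγ : 0 < γ) (hL : 0 < L) (h1 : γ * L < 1) (hσ : 0 ≤ σ)
    (f : EuclideanSpace ℝ (Fin d) → ℝ)
    (hf : ∀ y, f y = (L / 2) * ‖y‖ ^ 2)
    (z : ℕ → Ω → EuclideanSpace ℝ (Fin d))
    (hz0 : ∀ ω, z 0 ω = 0)
    (hmeas : ∀ t, Measurable (z t))
    (hindep : iIndepFun z μ)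
    (hL2 : ∀ t, MemLp (z t) 2 μ)
    (hmean : ∀ t, 1 ≤ t → ∫ ω, z t ω ∂μ = 0)
    (hvar : ∀ t, 1 ≤ t → ∫ ω, ‖z t ω‖ ^ 2 ∂μ = σ ^ 2)
    (x0 : EuclideanSpace ℝ (Fin d)) (x : ℕ → Ω → EuclideanSpace ℝ (Fin d))
    (hx0 : ∀ ω, x 0 ω = x0)
    (hrec : ∀ t ω, x (t + 1) ω = (1 - γ * L) • x t ω - γ • z (t + 1) ω + γ • z t ω)
    (T : ℕ) (hT : 1 ≤ T) :
    (1 - γ * L) ^ (2 * T) * ‖x0‖ ^ 2 + γ ^ 2 * σ ^ 2 ≤ ∫ ω, ‖x T ω‖ ^ 2 ∂μ ∧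
      (L / 2) * ((1 - γ * L) ^ (2 * T) * ‖x0‖ ^ 2 + γ ^ 2 * σ ^ 2) ≤
        ∫ ω, f (x T ω) ∂μ - 0 :=
  anti_pgd_noise_lower_bound_general μ d γ L σ hL f hf z hz0 hmeas hindep hL2 hmean hvar x0 x hx0
    hrec T hT
end

section
/- Let f : R^d → R be differentiable, convex, L-smooth, with minimizer x*. Consider iterates x_{t+1} = x_t − γ(∇f(x_t) + z_{t+1}) where z_{t+1} is a random vector independent of x_t with E[z_{t+1}] = 0 and E‖z_{t+1}‖² ≤ σ². If 0 < γ < 1/(2L), then E‖x_{t+1} − x*‖² ≤ E‖x_t − x*‖² − γ E[f(x_t) − f*] + γ²σ², and consequently (1/(T+1)) Σ_{t=0}^T E[f(x_t) − f*] ≤ ‖x_0 − x*‖²/(γ(T+1)) + γσ². -/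
/-!
A gradient step of length `γ ≤ 1 / (2L)` brings any point `y` closer to the minimizer: convexity
bounds `⟪∇f y, y - x*⟫` below by `f y - f*`, and `L`-smoothness gives
`‖∇f y‖² ≤ 2L (f y - f*)`, so `‖y - γ ∇f y - x*‖² ≤ ‖y - x*‖² - γ (f y - f*)`.
The iterate `x_t` is a measurable function of `z_0, …, z_t`, hence independent of `z_{t+1}`; as the
noise has mean zero, the cross term vanishes in expectation and the noise only adds
`γ² E‖z_{t+1}‖²`. Summing the resulting one-step inequality over `t ≤ T` telescopes.
-/

open MeasureTheory ProbabilityTheory Finset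

theorem continuous_of_norm_sub_le_mul {E F : Type*} [SeminormedAddCommGroup E]
    [SeminormedAddCommGroup F] {g : E → F} {L : ℝ} (h : ∀ y w, ‖g y - g w‖ ≤ L * ‖y - w‖) :
    Continuous g :=
  (LipschitzWith.of_dist_le' fun a b => by simpa only [dist_eq_norm] using h a b).continuous

section Smooth

variable {E : Type*} [NormedAddCommGroup E] [InnerProductSpace ℝ E]
  {f : E → ℝ} {g : E → E} {L : ℝ}

theorem le_add_inner_add_sq_of_hasGradientAt [CompleteSpace E]
    (hgrad : ∀ y, HasGradientAt f (g y) y) (hsmooth : ∀ y w, ‖g y - g w‖ ≤ L * ‖y - w‖) (y w : E) :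
    f w ≤ f y + inner ℝ (g y) (w - y) + L / 2 * ‖w - y‖ ^ 2 := by
  set c := w - y
  have hline (t : ℝ) : HasDerivAt (fun s : ℝ => f (y + s • c)) (inner ℝ (g (y + t • c)) c) t := by
    have := (hgrad (y + t • c)).hasFDerivAt.comp_hasDerivAt t
      (((hasDerivAt_id t).smul_const c).const_add y)
    simp only [InnerProductSpace.toDual_apply_apply, one_smul] at this
    exact this
  have hbound (t : ℝ) (ht : t ∈ Set.Ico (0 : ℝ) 1) :
      inner ℝ (g (y + t • c)) c ≤ inner ℝ (g y) c + L * t * ‖c‖ ^ 2 := by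
    have hLip : ‖g (y + t • c) - g y‖ ≤ L * (t * ‖c‖) := by
      simpa [norm_smul, abs_of_nonneg ht.1] using hsmooth (y + t • c) y
    calc inner ℝ (g (y + t • c)) c
        = inner ℝ (g y) c + inner ℝ (g (y + t • c) - g y) c := by
          rw [inner_sub_left]; ring
      _ ≤ inner ℝ (g y) c + L * (t * ‖c‖) * ‖c‖ := by
          gcongr
          exact (real_inner_le_norm _ _).trans (by gcongr)
      _ = inner ℝ (g y) c + L * t * ‖c‖ ^ 2 := by ring
  have hquad (t : ℝ) :
      HasDerivAt (fun s : ℝ => f y + s * inner ℝ (g y) c + L / 2 * s ^ 2 * ‖c‖ ^ 2)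
        (inner ℝ (g y) c + L * t * ‖c‖ ^ 2) t := by
    refine ((((hasDerivAt_id t).mul_const _).const_add (f y)).add
      (((hasDerivAt_pow 2 t).const_mul (L / 2)).mul_const (‖c‖ ^ 2))).congr_deriv ?_
    simp only [one_mul, Nat.cast_ofNat]
    ring
  have := image_le_of_deriv_right_le_deriv_boundary
    (fun t _ => (hline t).continuousAt.continuousWithinAt) (fun t _ => (hline t).hasDerivWithinAt)
    (by simp) (fun t _ => (hquad t).continuousAt.continuousWithinAt)
    (fun t _ => (hquad t).hasDerivWithinAt) hbound (Set.right_mem_Icc.2 zero_le_one)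
  simpa [c] using this

theorem sq_norm_le_two_mul_sub_of_hasGradientAt [CompleteSpace E]
    (hgrad : ∀ y, HasGradientAt f (g y) y) (hsmooth : ∀ y w, ‖g y - g w‖ ≤ L * ‖y - w‖)
    (hL : 0 < L) {xstar : E} (hmin : ∀ y, f xstar ≤ f y) (y : E) :
    ‖g y‖ ^ 2 ≤ 2 * L * (f y - f xstar) := by
  -- compare with the value after a gradient step of length `1 / L`
  have hstep := le_add_inner_add_sq_of_hasGradientAt hgrad hsmooth y (y - L⁻¹ • g y)
  rw [sub_sub_cancel_left, inner_neg_right, real_inner_smul_right, real_inner_self_eq_norm_sq,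
    norm_neg, norm_smul, Real.norm_of_nonneg (inv_nonneg.2 hL.le)] at hstep
  have hval : f y + -(L⁻¹ * ‖g y‖ ^ 2) + L / 2 * (L⁻¹ * ‖g y‖) ^ 2
      = f y - ‖g y‖ ^ 2 / (2 * L) := by
    field_simp; ring
  have hdecrease : ‖g y‖ ^ 2 / (2 * L) ≤ f y - f xstar := by
    linarith [(hmin _).trans (hstep.trans_eq hval)]
  rwa [div_le_iff₀' (by positivity)] at hdecrease

theorem sq_norm_gradient_step_sub_le (hconvex : ∀ y w, f y + inner ℝ (g y) (w - y) ≤ f w)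
    (hL : 0 < L) {xstar : E} (hgrad_sq : ∀ y, ‖g y‖ ^ 2 ≤ 2 * L * (f y - f xstar)) {γ : ℝ}
    (hγ : 0 ≤ γ) (hγL : 2 * L * γ ≤ 1) (y : E) :
    ‖y - γ • g y - xstar‖ ^ 2 ≤ ‖y - xstar‖ ^ 2 - γ * (f y - f xstar) := by
  have hinner : f y - f xstar ≤ inner ℝ (g y) (y - xstar) := by
    have := hconvex y xstar
    rw [← neg_sub, inner_neg_right] at this
    linarith
  have hgap : 0 ≤ f y - f xstar := nonneg_of_mul_nonneg_right
    ((sq_nonneg _).trans (hgrad_sq y)) (by positivity)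
  calc ‖y - γ • g y - xstar‖ ^ 2
      = ‖y - xstar‖ ^ 2 - 2 * γ * inner ℝ (g y) (y - xstar) + γ ^ 2 * ‖g y‖ ^ 2 := by
        rw [sub_right_comm, norm_sub_sq_real, real_inner_smul_right, real_inner_comm, norm_smul,
          Real.norm_of_nonneg hγ]
        ring
    _ ≤ ‖y - xstar‖ ^ 2 - 2 * γ * (f y - f xstar) + γ ^ 2 * (2 * L * (f y - f xstar)) := by
        gcongr
        exact hgrad_sq y
    _ ≤ ‖y - xstar‖ ^ 2 - γ * (f y - f xstar) := by
        nlinarith [mul_nonneg hγ hgap]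

end Smooth

section Probability

variable {Ω : Type*} [MeasurableSpace Ω] {μ : Measure Ω}

theorem integral_norm_sub_sq_of_indepFun [IsFiniteMeasure μ] {E : Type*} [NormedAddCommGroup E]
    [InnerProductSpace ℝ E] [CompleteSpace E] [MeasurableSpace E] [BorelSpace E] {U Z : Ω → E}
    (hUZ : IndepFun U Z μ) (hU : MemLp U 2 μ) (hZ : MemLp Z 2 μ) (hZ0 : ∫ ω, Z ω ∂μ = 0) :
    ∫ ω, ‖U ω - Z ω‖ ^ 2 ∂μ = ∫ ω, ‖U ω‖ ^ 2 ∂μ + ∫ ω, ‖Z ω‖ ^ 2 ∂μ := by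
  have hU1 := hU.integrable one_le_two
  have hZ1 := hZ.integrable one_le_two
  have hcross : ∫ ω, inner ℝ (U ω) (Z ω) ∂μ = 0 :=
    (hUZ.integral_bilin hU1 hZ1 (innerSL ℝ)).trans (by simp [hZ0])
  have hcross_int : Integrable (fun ω => inner ℝ (U ω) (Z ω)) μ :=
    hUZ.integrable_bilin hU1 hZ1 (innerSL ℝ)
  have hU2 := hU.integrable_norm_pow two_ne_zero
  have hZ2 := hZ.integrable_norm_pow two_ne_zero
  simp_rw [norm_sub_sq_real]
  rw [integral_add _ hZ2, integral_sub hU2 (hcross_int.const_mul 2), integral_const_mul, hcross,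
    mul_zero, sub_zero]
  exact hU2.sub (hcross_int.const_mul 2)

theorem ProbabilityTheory.iIndepFun.indepFun_of_measurable_iSup {ι : Type*} {β : ι → Type*}
    {m : ∀ i, MeasurableSpace (β i)} {z : ∀ i, Ω → β i} (hind : iIndepFun z μ)
    (hz : ∀ i, Measurable (z i)) {S : Set ι} {j : ι} (hj : j ∉ S) {γ : Type*}
    [MeasurableSpace γ] {X : Ω → γ} (hX : Measurable[⨆ i ∈ S, (m i).comap (z i)] X) :
    IndepFun X (z j) μ := by
  rw [IndepFun_iff_Indep]
  have := indep_iSup_of_disjoint (fun i => (hz i).comap_le) hind.iIndep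
    (Set.disjoint_singleton_right.2 hj)
  refine indep_of_indep_of_le_left (indep_of_indep_of_le_right this ?_) hX.comap_le
  exact le_iSup₂_of_le (f := fun i (_ : i ∈ ({j} : Set ι)) => (m i).comap (z i)) j rfl le_rfl

end Probability

theorem mean_le_of_le_sub_mul_add {a b : ℕ → ℝ} {γ c : ℝ} (hγ : 0 < γ) (ha : ∀ t, 0 ≤ a t)
    (hab : ∀ t, a (t + 1) ≤ a t - γ * b t + γ ^ 2 * c) (T : ℕ) :
    1 / ((T : ℝ) + 1) * ∑ t ∈ range (T + 1), b t ≤ a 0 / (γ * ((T : ℝ) + 1)) + γ * c := by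
  have htel : γ * ∑ t ∈ range (T + 1), b t ≤ a 0 + ((T : ℝ) + 1) * (γ ^ 2 * c) := by
    calc γ * ∑ t ∈ range (T + 1), b t
        ≤ ∑ t ∈ range (T + 1), (a t - a (t + 1) + γ ^ 2 * c) := by
          rw [mul_sum]
          exact sum_le_sum fun t _ => by linarith [hab t]
      _ = a 0 - a (T + 1) + ((T : ℝ) + 1) * (γ ^ 2 * c) := by
          rw [sum_add_distrib, sum_range_sub', sum_const, card_range, nsmul_eq_mul]
          push_cast; ring
      _ ≤ a 0 + ((T : ℝ) + 1) * (γ ^ 2 * c) := by linarith [ha (T + 1)]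
  calc 1 / ((T : ℝ) + 1) * ∑ t ∈ range (T + 1), b t
      = (γ * ∑ t ∈ range (T + 1), b t) / (γ * ((T : ℝ) + 1)) := by field_simp
    _ ≤ (a 0 + ((T : ℝ) + 1) * (γ ^ 2 * c)) / (γ * ((T : ℝ) + 1)) := by gcongr
    _ = a 0 / (γ * ((T : ℝ) + 1)) + γ * c := by field_simp

theorem measurable_iSup_comap_Iic_of_recursion {Ω β E : Type*} [MeasurableSpace β]
    [MeasurableSpace E] {z : ℕ → Ω → β} {x : ℕ → Ω → E} {F : E → β → E}
    (hF : Measurable (Function.uncurry F)) {x0 : E} (hx0 : ∀ ω, x 0 ω = x0)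
    (hrec : ∀ t ω, x (t + 1) ω = F (x t ω) (z (t + 1) ω)) (t : ℕ) :
    Measurable[⨆ i ∈ Set.Iic t, MeasurableSpace.comap (z i) ‹_›] (x t) := by
  induction t with
  | zero => simp [funext hx0]
  | succ t ih =>
    have hmono : (⨆ i ∈ Set.Iic t, MeasurableSpace.comap (z i) ‹_›) ≤
        ⨆ i ∈ Set.Iic (t + 1), MeasurableSpace.comap (z i) ‹_› :=
      biSup_mono fun i hi => le_trans hi (Nat.le_succ t)
    have hz : Measurable[⨆ i ∈ Set.Iic (t + 1), MeasurableSpace.comap (z i) ‹_›] (z (t + 1)) :=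
      (comap_measurable _).mono (le_iSup₂_of_le (t + 1) (Set.mem_Iic.2 le_rfl) le_rfl) le_rfl
    rw [funext (hrec t)]
    exact hF.comp ((ih.mono hmono le_rfl).prodMk hz)

theorem integral_sq_norm_sgd_step_le {Ω E : Type*} [MeasurableSpace Ω] {μ : Measure Ω}
    [IsProbabilityMeasure μ] [NormedAddCommGroup E] [InnerProductSpace ℝ E] [CompleteSpace E]
    [MeasurableSpace E] [BorelSpace E] [SecondCountableTopology E] {f : E → ℝ} {g : E → E}
    (hgrad : ∀ y, HasGradientAt f (g y) y) (hconvex : ∀ y w, f y + inner ℝ (g y) (w - y) ≤ f w)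
    {L : ℝ} (hL : 0 < L) (hsmooth : ∀ y w, ‖g y - g w‖ ≤ L * ‖y - w‖) {xstar : E}
    (hmin : ∀ y, f xstar ≤ f y) {γ : ℝ} (hγ : 0 ≤ γ) (hγL : 2 * L * γ ≤ 1) {X Z : Ω → E}
    (hXZ : IndepFun X Z μ) (hX : Measurable X) (hfX : Integrable (fun ω => f (X ω)) μ)
    (hX2 : Integrable (fun ω => ‖X ω - xstar‖ ^ 2) μ) (hZ : MemLp Z 2 μ)
    (hZ0 : ∫ ω, Z ω ∂μ = 0) :
    ∫ ω, ‖X ω - γ • (g (X ω) + Z ω) - xstar‖ ^ 2 ∂μ ≤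
      ∫ ω, ‖X ω - xstar‖ ^ 2 ∂μ - γ * ∫ ω, (f (X ω) - f xstar) ∂μ + γ ^ 2 * ∫ ω, ‖Z ω‖ ^ 2 ∂μ := by
  have hg := continuous_of_norm_sub_le_mul hsmooth
  have hdescent := sq_norm_gradient_step_sub_le hconvex hL
    (sq_norm_le_two_mul_sub_of_hasGradientAt hgrad hsmooth hL hmin) hγ hγL
  set U := fun ω => X ω - γ • g (X ω) - xstar
  have hgap : Integrable (fun ω => f (X ω) - f xstar) μ := hfX.sub (integrable_const _)
  have hbound : Integrable (fun ω => ‖X ω - xstar‖ ^ 2 - γ * (f (X ω) - f xstar)) μ :=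
    hX2.sub (hgap.const_mul γ)
  have hUm : Measurable U := by fun_prop
  have hU : MemLp U 2 μ := by
    refine (memLp_two_iff_integrable_sq_norm hUm.aestronglyMeasurable).2
      (hbound.mono' (by fun_prop) (.of_forall fun ω => ?_))
    rw [Real.norm_of_nonneg (by positivity)]
    exact hdescent (X ω)
  have hUZ : IndepFun U (fun ω => γ • Z ω) μ :=
    hXZ.comp (by fun_prop : Measurable fun y => y - γ • g y - xstar) (measurable_const_smul γ)
  have hZγ0 : ∫ ω, γ • Z ω ∂μ = 0 := by rw [integral_smul, hZ0, smul_zero]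
  calc ∫ ω, ‖X ω - γ • (g (X ω) + Z ω) - xstar‖ ^ 2 ∂μ
      = ∫ ω, ‖U ω - γ • Z ω‖ ^ 2 ∂μ := by
        congr with ω
        simp only [U, smul_add]
        abel_nf
    _ = ∫ ω, ‖U ω‖ ^ 2 ∂μ + γ ^ 2 * ∫ ω, ‖Z ω‖ ^ 2 ∂μ := by
        rw [integral_norm_sub_sq_of_indepFun hUZ hU (hZ.const_smul γ) hZγ0, ← integral_const_mul]
        simp only [norm_smul, mul_pow, Real.norm_eq_abs, sq_abs]
    _ ≤ ∫ ω, (‖X ω - xstar‖ ^ 2 - γ * (f (X ω) - f xstar)) ∂μ + γ ^ 2 * ∫ ω, ‖Z ω‖ ^ 2 ∂μ :=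
        add_le_add_left (integral_mono (hU.integrable_norm_pow two_ne_zero) hbound
          fun ω => hdescent (X ω)) _
    _ = _ := by
        rw [integral_sub hX2 (hgap.const_mul γ), integral_const_mul]

theorem pgd_convergence_general
    {Ω : Type*} [MeasurableSpace Ω] (μ : Measure Ω) [IsProbabilityMeasure μ]
    (d : ℕ) (f : EuclideanSpace ℝ (Fin d) → ℝ)
    (g : EuclideanSpace ℝ (Fin d) → EuclideanSpace ℝ (Fin d))
    (hgrad : ∀ y, HasGradientAt f (g y) y)
    (hconvex : ∀ y w, f y + (inner ℝ (g y) (w - y) : ℝ) ≤ f w)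
    (L : ℝ) (hL : 0 < L)
    (hsmooth : ∀ y w, ‖g y - g w‖ ≤ L * ‖y - w‖)
    (xstar : EuclideanSpace ℝ (Fin d)) (hmin : ∀ y, f xstar ≤ f y)
    (γ σ : ℝ) (hγ : 0 < γ) (hγL : γ < 1 / (2 * L))
    (z : ℕ → Ω → EuclideanSpace ℝ (Fin d))
    (hmeas : ∀ t, Measurable (z t))
    (hindep : iIndepFun z μ)
    (hL2 : ∀ t, MemLp (z t) 2 μ)
    (hmean : ∀ t, 1 ≤ t → ∫ ω, z t ω ∂μ = 0)
    (hvar : ∀ t, 1 ≤ t → ∫ ω, ‖z t ω‖ ^ 2 ∂μ ≤ σ ^ 2)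
    (x0 : EuclideanSpace ℝ (Fin d)) (x : ℕ → Ω → EuclideanSpace ℝ (Fin d))
    (hx0 : ∀ ω, x 0 ω = x0)
    (hrec : ∀ t ω, x (t + 1) ω = x t ω - γ • (g (x t ω) + z (t + 1) ω))
    (hint_f : ∀ t, Integrable (fun ω => f (x t ω)) μ)
    (hint_x : ∀ t, Integrable (fun ω => ‖x t ω - xstar‖ ^ 2) μ)
    (T : ℕ) :
    (∀ t, ∫ ω, ‖x (t + 1) ω - xstar‖ ^ 2 ∂μ ≤
        ∫ ω, ‖x t ω - xstar‖ ^ 2 ∂μ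
          - γ * (∫ ω, (f (x t ω) - f xstar) ∂μ) + γ ^ 2 * σ ^ 2) ∧
      (1 / ((T : ℝ) + 1)) * ∑ t ∈ Finset.range (T + 1), ∫ ω, (f (x t ω) - f xstar) ∂μ ≤
        ‖x0 - xstar‖ ^ 2 / (γ * ((T : ℝ) + 1)) + γ * σ ^ 2 := by
  have hg := continuous_of_norm_sub_le_mul hsmooth
  have hγL' : 2 * L * γ ≤ 1 := by
    rw [lt_div_iff₀ (by positivity)] at hγL
    linarith
  have hadapted := measurable_iSup_comap_Iic_of_recursion
    (F := fun y v => y - γ • (g y + v)) (by fun_prop) hx0 hrec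
  have hstep : ∀ t, ∫ ω, ‖x (t + 1) ω - xstar‖ ^ 2 ∂μ ≤
      ∫ ω, ‖x t ω - xstar‖ ^ 2 ∂μ - γ * (∫ ω, (f (x t ω) - f xstar) ∂μ) + γ ^ 2 * σ ^ 2 := by
    intro t
    simp only [hrec]
    refine (integral_sq_norm_sgd_step_le hgrad hconvex hL hsmooth hmin hγ.le hγL'
      (hindep.indepFun_of_measurable_iSup hmeas (by simp) (hadapted t))
      ((hadapted t).mono (iSup₂_le fun i _ => (hmeas i).comap_le) le_rfl) (hint_f t) (hint_x t)
      (hL2 (t + 1)) (hmean (t + 1) le_add_self)).trans ?_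
    gcongr
    exact hvar (t + 1) le_add_self
  refine ⟨hstep, ?_⟩
  have := mean_le_of_le_sub_mul_add (a := fun t => ∫ ω, ‖x t ω - xstar‖ ^ 2 ∂μ) hγ
    (fun t => integral_nonneg fun ω => sq_nonneg _) hstep T
  simpa [hx0] using this

/-- PGD convergence rate: for `f` convex, `L`-smooth with minimizer `x*`, iterates
`x_{t+1} = x_t − γ(∇f(x_t) + z_{t+1})` with independent mean-zero noise of second
moment `≤ σ²` and `0 < γ < 1/(2L)` satisfy the one-step descent inequality
`E‖x_{t+1} − x*‖² ≤ E‖x_t − x*‖² − γE[f(x_t) − f*] + γ²σ²` and consequently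
`(1/(T+1)) ∑_{t=0}^T E[f(x_t) − f*] ≤ ‖x_0 − x*‖²/(γ(T+1)) + γσ²`. -/
theorem pgd_convergence
    {Ω : Type*} [MeasurableSpace Ω] (μ : Measure Ω) [IsProbabilityMeasure μ]
    (d : ℕ) (f : EuclideanSpace ℝ (Fin d) → ℝ)
    (g : EuclideanSpace ℝ (Fin d) → EuclideanSpace ℝ (Fin d))
    (hgrad : ∀ y, HasGradientAt f (g y) y)
    (hconvex : ∀ y w, f y + (inner ℝ (g y) (w - y) : ℝ) ≤ f w)
    (L : ℝ) (hL : 0 < L)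
    (hsmooth : ∀ y w, ‖g y - g w‖ ≤ L * ‖y - w‖)
    (xstar : EuclideanSpace ℝ (Fin d)) (hmin : ∀ y, f xstar ≤ f y)
    (γ σ : ℝ) (hγ : 0 < γ) (hγL : γ < 1 / (2 * L)) (hσ : 0 ≤ σ)
    (z : ℕ → Ω → EuclideanSpace ℝ (Fin d))
    (hmeas : ∀ t, Measurable (z t))
    (hindep : iIndepFun z μ)
    (hL2 : ∀ t, MemLp (z t) 2 μ)
    (hmean : ∀ t, 1 ≤ t → ∫ ω, z t ω ∂μ = 0)
    (hvar : ∀ t, 1 ≤ t → ∫ ω, ‖z t ω‖ ^ 2 ∂μ ≤ σ ^ 2)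
    (x0 : EuclideanSpace ℝ (Fin d)) (x : ℕ → Ω → EuclideanSpace ℝ (Fin d))
    (hx0 : ∀ ω, x 0 ω = x0)
    (hrec : ∀ t ω, x (t + 1) ω = x t ω - γ • (g (x t ω) + z (t + 1) ω))
    (hint_f : ∀ t, Integrable (fun ω => f (x t ω)) μ)
    (hint_x : ∀ t, Integrable (fun ω => ‖x t ω - xstar‖ ^ 2) μ)
    (T : ℕ) :
    (∀ t, ∫ ω, ‖x (t + 1) ω - xstar‖ ^ 2 ∂μ ≤
        ∫ ω, ‖x t ω - xstar‖ ^ 2 ∂μ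
          - γ * (∫ ω, (f (x t ω) - f xstar) ∂μ) + γ ^ 2 * σ ^ 2) ∧
      (1 / ((T : ℝ) + 1)) * ∑ t ∈ Finset.range (T + 1), ∫ ω, (f (x t ω) - f xstar) ∂μ ≤
        ‖x0 - xstar‖ ^ 2 / (γ * ((T : ℝ) + 1)) + γ * σ ^ 2 :=
  pgd_convergence_general μ d f g hgrad hconvex L hL hsmooth xstar hmin γ σ hγ hγL z hmeas hindep
    hL2 hmean hvar x0 x hx0 hrec hint_f hint_x T
end

section
/- Let f : R^d → R be differentiable, convex, L-smooth with minimizer x*, and consider Anti-PGD iterates x_{t+1} = x_t − γ(∇f(x_t) + z_{t+1} − z_t), z_0 = 0, where z_t are independent mean-zero random vectors with E‖z_t‖² ≤ σ². If 0 < γ < 1/(4L), then with the virtual sequence x̃_{t+1} = x̃_t − γ∇f(x_t), x̃_0 = x_0, one has E‖x̃_{t+1} − x*‖² ≤ E‖x̃_t − x*‖² − (γ/2)E[f(x_t) − f*] + 2Lγ³σ², and consequently (1/(T+1)) Σ_{t=0}^T E[f(x_t) − f*] ≤ 2‖x_0 − x*‖²/(γ(T+1)) + 4Lγ²σ². -/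
open MeasureTheory ProbabilityTheory Finset InnerProductSpace
open scoped RealInnerProductSpace

/-!
Since `z 0 = 0`, induction gives `x t = xt t - γ • z t`; hence the virtual iterate `xt t` is a
function of `z 0, …, z (t - 1)` and is independent of `z t`. Expanding `‖xt (t+1) - x*‖²` with
`xt t - x* = (x t - x*) + γ • z t`, convexity bounds `⟪∇f(x t), x t - x*⟫` below by
`f (x t) - f*`, smoothness bounds the cross term `⟪∇f(x t) - ∇f(xt t), z t⟫` by `Lγ‖z t‖²`, and
`⟪∇f(xt t), z t⟫` has mean zero by independence. The term `γ²‖∇f(x t)‖² ≤ 4Lγ²(f (x t) - f*)`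
is absorbed since `4Lγ ≤ 1`. Summing the one-step inequality telescopes to the averaged bound.
-/

theorem continuous_of_norm_sub_le {α β : Type*} [SeminormedAddCommGroup α]
    [SeminormedAddCommGroup β] {g : α → β} {L : ℝ} (hsmooth : ∀ y w, ‖g y - g w‖ ≤ L * ‖y - w‖) :
    Continuous g :=
  (LipschitzWith.of_dist_le' (by simpa only [dist_eq_norm] using hsmooth)).continuous

section

variable {E : Type*} [NormedAddCommGroup E] [InnerProductSpace ℝ E]
  {f : E → ℝ} {g : E → E} {L : ℝ} {xstar : E}

theorem le_add_inner_add_mul_norm_sq_of_lipschitz_gradient [CompleteSpace E]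
    (hgrad : ∀ y, HasGradientAt f (g y) y) (hsmooth : ∀ y w, ‖g y - g w‖ ≤ L * ‖y - w‖)
    (hL : 0 ≤ L) (y w : E) : f w ≤ f y + ⟪g y, w - y⟫ + L * ‖w - y‖ ^ 2 := by
  have hbound : ∀ u ∈ segment ℝ y w, ‖toDual ℝ E (g u) - toDual ℝ E (g y)‖ ≤ L * ‖w - y‖ := by
    intro u hu
    rw [← map_sub, LinearIsometryEquiv.norm_map]
    calc ‖g u - g y‖ ≤ L * ‖u - y‖ := hsmooth u y
      _ ≤ L * ‖w - y‖ := by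
        gcongr
        rw [← dist_eq_norm, ← dist_eq_norm, dist_comm u, dist_comm w]
        linarith [dist_add_dist_of_mem_segment hu, dist_nonneg (x := u) (y := w)]
  have h := (convex_segment y w).norm_image_sub_le_of_norm_hasFDerivWithin_le'
    (fun u _ => (hgrad u).hasFDerivAt.hasFDerivWithinAt) hbound
    (left_mem_segment ℝ y w) (right_mem_segment ℝ y w)
  rw [toDual_apply_apply, Real.norm_eq_abs] at h
  nlinarith [le_abs_self (f w - f y - ⟪g y, w - y⟫)]

theorem norm_sq_le_four_mul_sub_of_forall_le [CompleteSpace E]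
    (hgrad : ∀ y, HasGradientAt f (g y) y) (hsmooth : ∀ y w, ‖g y - g w‖ ≤ L * ‖y - w‖)
    (hL : 0 < L) (hmin : ∀ y, f xstar ≤ f y) (y : E) :
    ‖g y‖ ^ 2 ≤ 4 * L * (f y - f xstar) := by
  -- a gradient step of length `1 / (2L)` from `y` cannot go below `f xstar`
  obtain ⟨c, hc⟩ : ∃ c : ℝ, 2 * L * c = 1 := ⟨1 / (2 * L), by field_simp⟩
  have h := le_add_inner_add_mul_norm_sq_of_lipschitz_gradient hgrad hsmooth hL.le y (y - c • g y)
  rw [sub_sub_cancel_left, inner_neg_right, real_inner_smul_right, real_inner_self_eq_norm_sq,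
    norm_neg, norm_smul, mul_pow, Real.norm_eq_abs, sq_abs] at h
  linear_combination (4 * L) * (hmin (y - c • g y)) + 4 * L * h + ‖g y‖ ^ 2 * (2 * L * c - 1) * hc

theorem norm_le_mul_norm_sub_of_forall_le [CompleteSpace E]
    (hgrad : ∀ y, HasGradientAt f (g y) y) (hsmooth : ∀ y w, ‖g y - g w‖ ≤ L * ‖y - w‖)
    (hL : 0 < L) (hmin : ∀ y, f xstar ≤ f y) (y : E) : ‖g y‖ ≤ L * ‖y - xstar‖ := by
  have hzero : g xstar = 0 := by
    simpa using norm_sq_le_four_mul_sub_of_forall_le hgrad hsmooth hL hmin xstar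
  simpa [hzero] using hsmooth y xstar

theorem norm_virtual_step_sub_sq_le
    (hconvex : ∀ y w, f y + ⟪g y, w - y⟫ ≤ f w) (hsmooth : ∀ y w, ‖g y - g w‖ ≤ L * ‖y - w‖)
    (hgrad_sq : ∀ y, ‖g y‖ ^ 2 ≤ 4 * L * (f y - f xstar)) (hmin : ∀ y, f xstar ≤ f y)
    {γ : ℝ} (hγ : 0 ≤ γ) (hγL : 4 * L * γ ≤ 1) (xt z : E) :
    ‖xt - γ • g (xt - γ • z) - xstar‖ ^ 2 ≤ ‖xt - xstar‖ ^ 2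
      - γ / 2 * (f (xt - γ • z) - f xstar) - 2 * γ ^ 2 * ⟪g xt, z⟫ + 2 * L * γ ^ 3 * ‖z‖ ^ 2 := by
  set x := xt - γ • z
  have hsplit : ⟪xt - xstar, g x⟫ = ⟪g x, x - xstar⟫ + γ * ⟪g x - g xt, z⟫ + γ * ⟪g xt, z⟫ := by
    rw [show xt - xstar = (x - xstar) + γ • z by simp only [x]; abel]
    simp only [inner_add_left, inner_sub_left, inner_sub_right, real_inner_smul_left]
    rw [real_inner_comm (g x) x, real_inner_comm (g x) xstar, real_inner_comm (g x) z]
    ring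
  have hexpand : ‖xt - γ • g x - xstar‖ ^ 2
      = ‖xt - xstar‖ ^ 2 - 2 * γ * ⟪xt - xstar, g x⟫ + γ ^ 2 * ‖g x‖ ^ 2 := by
    rw [show xt - γ • g x - xstar = (xt - xstar) - γ • g x by abel, norm_sub_sq_real,
      real_inner_smul_right, norm_smul, mul_pow, Real.norm_eq_abs, sq_abs]
    ring
  have hconv : f x - f xstar ≤ ⟪g x, x - xstar⟫ := by
    have := hconvex x xstar
    rw [← neg_sub, inner_neg_right] at this
    linarith
  -- `x - xt = -γ z`, so smoothness makes the cross term second order in `γ`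
  have hcross : -(L * γ * ‖z‖ ^ 2) ≤ ⟪g x - g xt, z⟫ := by
    have hdist : ‖x - xt‖ = γ * ‖z‖ := by simp [x, norm_smul, abs_of_nonneg hγ]
    have := (abs_le.1 (abs_real_inner_le_norm (g x - g xt) z)).1
    have := mul_le_mul_of_nonneg_right (hdist ▸ hsmooth x xt) (norm_nonneg z)
    nlinarith
  have hD := sub_nonneg.2 (hmin x)
  rw [hexpand, hsplit]
  nlinarith [mul_le_mul_of_nonneg_left hconv hγ, mul_le_mul_of_nonneg_left hcross (sq_nonneg γ),
    mul_le_mul_of_nonneg_left (hgrad_sq x) (sq_nonneg γ),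
    mul_le_mul_of_nonneg_right hγL (mul_nonneg hγ hD)]

theorem iterate_eq_virtual_sub_smul_noise {γ : ℝ} {x xt z : ℕ → E} (hz0 : z 0 = 0)
    (hrec : ∀ t, x (t + 1) = x t - γ • (g (x t) + z (t + 1) - z t)) (hxt0 : xt 0 = x 0)
    (hvirt : ∀ t, xt (t + 1) = xt t - γ • g (x t)) (t : ℕ) : x t = xt t - γ • z t := by
  induction t with
  | zero => simp [hxt0, hz0]
  | succ t ih =>
    rw [hrec, hvirt, ih]
    module

theorem measurable_iSup_comap_of_recursion {Ω α β : Type*} [MeasurableSpace α]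
    [mβ : MeasurableSpace β] {z : ℕ → Ω → β} {X : ℕ → Ω → α} {Φ : α → β → α}
    (hΦ : Measurable (Function.uncurry Φ)) {c : α} (h0 : ∀ ω, X 0 ω = c)
    (hrec : ∀ t ω, X (t + 1) ω = Φ (X t ω) (z t ω)) (t : ℕ) :
    Measurable[⨆ i < t, mβ.comap (z i)] (X t) := by
  induction t with
  | zero => simpa only [funext h0] using measurable_const
  | succ t ih =>
    rw [funext (hrec t)]
    refine hΦ.comp (Measurable.prodMk ?_ ?_)
    · exact ih.mono (iSup₂_mono' fun i hi => ⟨i, by omega, le_rfl⟩) le_rfl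
    · exact measurable_iff_comap_le.2
        (le_iSup₂ (f := fun i (_ : i < t + 1) => mβ.comap (z i)) t t.lt_succ_self)

section Probability

variable {Ω : Type*} [MeasurableSpace Ω] {μ : Measure Ω}

theorem ProbabilityTheory.iIndepFun.indepFun_of_measurable_iSup_comap_lt {α β : Type*}
    [MeasurableSpace α] [mβ : MeasurableSpace β] {z : ℕ → Ω → β} (hz : ∀ i, Measurable (z i))
    (hindep : iIndepFun z μ) {X : Ω → α} {t : ℕ} (hX : Measurable[⨆ i < t, mβ.comap (z i)] X) :
    IndepFun X (z t) μ := by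
  have h := indep_iSup_of_disjoint (fun i => (hz i).comap_le)
    ((iIndepFun_iff_iIndep _ _ _).1 hindep) (S := Set.Iio t) (T := {t}) (by simp)
  rw [IndepFun_iff_Indep]
  exact indep_of_indep_of_le h hX.comap_le
    (le_iSup₂ (f := fun i (_ : i ∈ ({t} : Set ℕ)) => mβ.comap (z i)) t rfl)

theorem ProbabilityTheory.IndepFun.integral_inner_eq_zero [CompleteSpace E] [MeasurableSpace E]
    [BorelSpace E] {X Z : Ω → E} (hXZ : IndepFun X Z μ) (hX : Integrable X μ) (hZ : Integrable Z μ)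
    (hZ0 : ∫ ω, Z ω ∂μ = 0) : ∫ ω, ⟪X ω, Z ω⟫ ∂μ = 0 := by
  have h := hXZ.integral_bilin hX hZ (innerSL ℝ)
  rw [hZ0, map_zero] at h
  exact h

theorem integral_norm_virtual_step_sub_sq_le [CompleteSpace E] [MeasurableSpace E] [BorelSpace E]
    [IsProbabilityMeasure μ]
    (hgrad : ∀ y, HasGradientAt f (g y) y) (hconvex : ∀ y w, f y + ⟪g y, w - y⟫ ≤ f w)
    (hsmooth : ∀ y w, ‖g y - g w‖ ≤ L * ‖y - w‖) (hL : 0 < L) (hmin : ∀ y, f xstar ≤ f y)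
    {γ σ : ℝ} (hγ : 0 ≤ γ) (hγL : 4 * L * γ ≤ 1) {X Xt Xt' Z : Ω → E}
    (hX : ∀ ω, X ω = Xt ω - γ • Z ω) (hXt' : ∀ ω, Xt' ω = Xt ω - γ • g (X ω))
    (hind : IndepFun Xt Z μ) (hXt : AEStronglyMeasurable Xt μ) (hZ : MemLp Z 2 μ)
    (hZ0 : ∫ ω, Z ω ∂μ = 0) (hZσ : ∫ ω, ‖Z ω‖ ^ 2 ∂μ ≤ σ ^ 2)
    (hfX : Integrable (fun ω => f (X ω)) μ) (hXt_sq : Integrable (fun ω => ‖Xt ω - xstar‖ ^ 2) μ)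
    (hXt'_sq : Integrable (fun ω => ‖Xt' ω - xstar‖ ^ 2) μ) :
    ∫ ω, ‖Xt' ω - xstar‖ ^ 2 ∂μ ≤ ∫ ω, ‖Xt ω - xstar‖ ^ 2 ∂μ
      - γ / 2 * ∫ ω, (f (X ω) - f xstar) ∂μ + 2 * L * γ ^ 3 * σ ^ 2 := by
  have hg := continuous_of_norm_sub_le hsmooth
  have hgXt : Integrable (fun ω => g (Xt ω)) μ := by
    have hdist : Integrable (fun ω => ‖Xt ω - xstar‖) μ :=
      ((memLp_two_iff_integrable_sq (hXt.sub aestronglyMeasurable_const).norm).2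
        hXt_sq).integrable one_le_two
    exact (hdist.const_mul L).mono' (hg.comp_aestronglyMeasurable hXt)
      (ae_of_all _ fun ω => norm_le_mul_norm_sub_of_forall_le hgrad hsmooth hL hmin _)
  have hZint : Integrable Z μ := hZ.integrable one_le_two
  have hindg : IndepFun (fun ω => g (Xt ω)) Z μ := hind.comp hg.measurable measurable_id
  have hinner : Integrable (fun ω => ⟪g (Xt ω), Z ω⟫) μ :=
    hindg.integrable_bilin hgXt hZint (innerSL ℝ)
  have hpointwise : ∀ ω, ‖Xt' ω - xstar‖ ^ 2 ≤ ‖Xt ω - xstar‖ ^ 2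
      - γ / 2 * (f (X ω) - f xstar) - 2 * γ ^ 2 * ⟪g (Xt ω), Z ω⟫
      + 2 * L * γ ^ 3 * ‖Z ω‖ ^ 2 := fun ω => by
    rw [hXt', hX]
    exact norm_virtual_step_sub_sq_le hconvex hsmooth
      (norm_sq_le_four_mul_sub_of_forall_le hgrad hsmooth hL hmin) hmin hγ hγL _ _
  have hfX' : Integrable (fun ω => f (X ω) - f xstar) μ := hfX.sub (integrable_const _)
  have hZsq : Integrable (fun ω => ‖Z ω‖ ^ 2) μ := hZ.norm.integrable_sq
  have h := integral_mono hXt'_sq (by fun_prop) hpointwise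
  rw [integral_add (by fun_prop) (by fun_prop), integral_sub (by fun_prop) (by fun_prop),
    integral_sub (by fun_prop) (by fun_prop), integral_const_mul, integral_const_mul,
    integral_const_mul, hindg.integral_inner_eq_zero hgXt hZint hZ0] at h
  nlinarith [mul_le_mul_of_nonneg_left hZσ (by positivity : 0 ≤ 2 * L * γ ^ 3)]

end Probability

end

theorem mean_le_of_forall_le_sub_mul_add {S F : ℕ → ℝ} {c e : ℝ} (hc : 0 < c)
    (hS : ∀ t, 0 ≤ S t) (hstep : ∀ t, S (t + 1) ≤ S t - c * F t + e) (T : ℕ) :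
    1 / ((T : ℝ) + 1) * ∑ t ∈ range (T + 1), F t ≤ S 0 / (c * ((T : ℝ) + 1)) + e / c := by
  have hsum : ∑ t ∈ range (T + 1), c * F t ≤ ∑ t ∈ range (T + 1), (S t - S (t + 1) + e) :=
    sum_le_sum fun t _ => by linarith [hstep t]
  rw [← mul_sum, sum_add_distrib, sum_range_sub', sum_const, card_range, nsmul_eq_mul] at hsum
  push_cast at hsum
  have hT : (0 : ℝ) < T + 1 := by positivity
  rw [div_add_div _ _ (by positivity) hc.ne', one_div_mul_eq_div, div_le_div_iff₀ hT (by positivity)]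
  nlinarith [mul_le_mul_of_nonneg_left (hsum.trans (by linarith [hS (T + 1)]) :
    c * ∑ t ∈ range (T + 1), F t ≤ S 0 + (T + 1) * e) (mul_pos hc hT).le]

theorem anti_pgd_convergence_general
    {Ω : Type*} [MeasurableSpace Ω] (μ : Measure Ω) [IsProbabilityMeasure μ]
    (d : ℕ) (f : EuclideanSpace ℝ (Fin d) → ℝ)
    (g : EuclideanSpace ℝ (Fin d) → EuclideanSpace ℝ (Fin d))
    (hgrad : ∀ y, HasGradientAt f (g y) y)
    (hconvex : ∀ y w, f y + (inner ℝ (g y) (w - y) : ℝ) ≤ f w)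
    (L : ℝ) (hL : 0 < L)
    (hsmooth : ∀ y w, ‖g y - g w‖ ≤ L * ‖y - w‖)
    (xstar : EuclideanSpace ℝ (Fin d)) (hmin : ∀ y, f xstar ≤ f y)
    (γ σ : ℝ) (hγ : 0 < γ) (hγL : γ < 1 / (4 * L))
    (z : ℕ → Ω → EuclideanSpace ℝ (Fin d))
    (hz0 : ∀ ω, z 0 ω = 0)
    (hmeas : ∀ t, Measurable (z t))
    (hindep : iIndepFun z μ)
    (hL2 : ∀ t, MemLp (z t) 2 μ)
    (hmean : ∀ t, 1 ≤ t → ∫ ω, z t ω ∂μ = 0)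
    (hvar : ∀ t, 1 ≤ t → ∫ ω, ‖z t ω‖ ^ 2 ∂μ ≤ σ ^ 2)
    (x0 : EuclideanSpace ℝ (Fin d))
    (x xt : ℕ → Ω → EuclideanSpace ℝ (Fin d))
    (hx0 : ∀ ω, x 0 ω = x0)
    (hrec : ∀ t ω, x (t + 1) ω = x t ω - γ • (g (x t ω) + z (t + 1) ω - z t ω))
    (hxt0 : ∀ ω, xt 0 ω = x 0 ω)
    (hvirt : ∀ t ω, xt (t + 1) ω = xt t ω - γ • g (x t ω))
    (hint_f : ∀ t, Integrable (fun ω => f (x t ω)) μ)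
    (hint_x : ∀ t, Integrable (fun ω => ‖xt t ω - xstar‖ ^ 2) μ)
    (T : ℕ) :
    (∀ t, ∫ ω, ‖xt (t + 1) ω - xstar‖ ^ 2 ∂μ ≤
        ∫ ω, ‖xt t ω - xstar‖ ^ 2 ∂μ
          - (γ / 2) * (∫ ω, (f (x t ω) - f xstar) ∂μ) + 2 * L * γ ^ 3 * σ ^ 2) ∧
      (1 / ((T : ℝ) + 1)) * ∑ t ∈ Finset.range (T + 1), ∫ ω, (f (x t ω) - f xstar) ∂μ ≤
        2 * ‖x0 - xstar‖ ^ 2 / (γ * ((T : ℝ) + 1)) + 4 * L * γ ^ 2 * σ ^ 2 := by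
  have hγL4 : 4 * L * γ ≤ 1 := by
    rw [lt_div_iff₀ (by positivity)] at hγL
    linarith
  have hx : ∀ t ω, x t ω = xt t ω - γ • z t ω := fun t ω =>
    iterate_eq_virtual_sub_smul_noise (x := (x · ω)) (xt := (xt · ω)) (z := (z · ω)) (hz0 ω)
      (fun t => hrec t ω) (hxt0 ω) (fun t => hvirt t ω) t
  have hg := continuous_of_norm_sub_le hsmooth
  have hadapted : ∀ t, Measurable[⨆ i < t, MeasurableSpace.comap (z i) inferInstance] (xt t) :=
    measurable_iSup_comap_of_recursion (Φ := fun a b => a - γ • g (a - γ • b))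
      (by fun_prop : Continuous _).measurable (fun ω => (hxt0 ω).trans (hx0 ω))
      (fun t ω => by rw [hvirt, hx])
  have hmean_all : ∀ t, ∫ ω, z t ω ∂μ = 0 := fun t => by
    rcases t.eq_zero_or_pos with rfl | ht
    · simp [hz0]
    · exact hmean t ht
  have hvar_all : ∀ t, ∫ ω, ‖z t ω‖ ^ 2 ∂μ ≤ σ ^ 2 := fun t => by
    rcases t.eq_zero_or_pos with rfl | ht
    · simp [hz0, sq_nonneg]
    · exact hvar t ht
  have hstep := fun t => integral_norm_virtual_step_sub_sq_le hgrad hconvex hsmooth hL hmin hγ.le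
    hγL4 (hx t) (hvirt t) (hindep.indepFun_of_measurable_iSup_comap_lt hmeas (hadapted t))
    ((hadapted t).mono (iSup₂_le fun i _ => (hmeas i).comap_le) le_rfl).aestronglyMeasurable
    (hL2 t) (hmean_all t) (hvar_all t) (hint_f t) (hint_x t) (hint_x (t + 1))
  refine ⟨hstep, ?_⟩
  have h := mean_le_of_forall_le_sub_mul_add (half_pos hγ)
    (fun t => integral_nonneg fun ω => sq_nonneg ‖xt t ω - xstar‖) hstep T
  have hS0 : ∫ ω, ‖xt 0 ω - xstar‖ ^ 2 ∂μ = ‖x0 - xstar‖ ^ 2 := by simp [hxt0, hx0]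
  rw [hS0] at h
  convert h using 2 <;> field_simp
  ring

/-- Anti-PGD convergence rate: for `f` convex, `L`-smooth with minimizer `x*`,
Anti-PGD iterates `x_{t+1} = x_t − γ(∇f(x_t) + z_{t+1} − z_t)` (`z_0 = 0`) with
independent mean-zero noise of second moment `≤ σ²` and `0 < γ < 1/(4L)` satisfy,
with the virtual sequence `x̃_{t+1} = x̃_t − γ∇f(x_t)`, `x̃_0 = x_0`:
`E‖x̃_{t+1} − x*‖² ≤ E‖x̃_t − x*‖² − (γ/2)E[f(x_t) − f*] + 2Lγ³σ²` and consequently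
`(1/(T+1)) ∑_{t=0}^T E[f(x_t) − f*] ≤ 2‖x_0 − x*‖²/(γ(T+1)) + 4Lγ²σ²`. -/
theorem anti_pgd_convergence
    {Ω : Type*} [MeasurableSpace Ω] (μ : Measure Ω) [IsProbabilityMeasure μ]
    (d : ℕ) (f : EuclideanSpace ℝ (Fin d) → ℝ)
    (g : EuclideanSpace ℝ (Fin d) → EuclideanSpace ℝ (Fin d))
    (hgrad : ∀ y, HasGradientAt f (g y) y)
    (hconvex : ∀ y w, f y + (inner ℝ (g y) (w - y) : ℝ) ≤ f w)
    (L : ℝ) (hL : 0 < L)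
    (hsmooth : ∀ y w, ‖g y - g w‖ ≤ L * ‖y - w‖)
    (xstar : EuclideanSpace ℝ (Fin d)) (hmin : ∀ y, f xstar ≤ f y)
    (γ σ : ℝ) (hγ : 0 < γ) (hγL : γ < 1 / (4 * L)) (hσ : 0 ≤ σ)
    (z : ℕ → Ω → EuclideanSpace ℝ (Fin d))
    (hz0 : ∀ ω, z 0 ω = 0)
    (hmeas : ∀ t, Measurable (z t))
    (hindep : iIndepFun z μ)
    (hL2 : ∀ t, MemLp (z t) 2 μ)
    (hmean : ∀ t, 1 ≤ t → ∫ ω, z t ω ∂μ = 0)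
    (hvar : ∀ t, 1 ≤ t → ∫ ω, ‖z t ω‖ ^ 2 ∂μ ≤ σ ^ 2)
    (x0 : EuclideanSpace ℝ (Fin d))
    (x xt : ℕ → Ω → EuclideanSpace ℝ (Fin d))
    (hx0 : ∀ ω, x 0 ω = x0)
    (hrec : ∀ t ω, x (t + 1) ω = x t ω - γ • (g (x t ω) + z (t + 1) ω - z t ω))
    (hxt0 : ∀ ω, xt 0 ω = x 0 ω)
    (hvirt : ∀ t ω, xt (t + 1) ω = xt t ω - γ • g (x t ω))
    (hint_f : ∀ t, Integrable (fun ω => f (x t ω)) μ)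
    (hint_x : ∀ t, Integrable (fun ω => ‖xt t ω - xstar‖ ^ 2) μ)
    (T : ℕ) :
    (∀ t, ∫ ω, ‖xt (t + 1) ω - xstar‖ ^ 2 ∂μ ≤
        ∫ ω, ‖xt t ω - xstar‖ ^ 2 ∂μ
          - (γ / 2) * (∫ ω, (f (x t ω) - f xstar) ∂μ) + 2 * L * γ ^ 3 * σ ^ 2) ∧
      (1 / ((T : ℝ) + 1)) * ∑ t ∈ Finset.range (T + 1), ∫ ω, (f (x t ω) - f xstar) ∂μ ≤
        2 * ‖x0 - xstar‖ ^ 2 / (γ * ((T : ℝ) + 1)) + 4 * L * γ ^ 2 * σ ^ 2 :=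
  anti_pgd_convergence_general μ d f g hgrad hconvex L hL hsmooth xstar hmin γ σ hγ hγL z hz0 hmeas
    hindep hL2 hmean hvar x0 x xt hx0 hrec hxt0 hvirt hint_f hint_x T
end

section
/- Consider PGD on f(x) = (L/2)x² (scalar) with iterates x_{t+1} = (1 − γL)x_t − γ z_{t+1} and the virtual sequence x̃_{t+1} = x̃_t − γL x_t, x̃_0 = x_0. Then x̃_{T} satisfies E[x̃_T²] = (1 − γL)^{2T} x_0² + γ² Σ_{j=1}^{T−1} [1 − (1 − γL)^j]² σ², and if T ≥ 2(log 4)/(γL) then E[x̃_T²] ≥ γ²σ²T/4. -/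
/-!
Subtracting the two recursions gives `x̃_{t+1} - x_{t+1} = x̃_t - x_t + γ z_{t+1}`, so with
`r = 1 - γL` the virtual iterate `x̃_T = r^T x₀ + Σ_{j ≤ T} γ (1 - r^{T-j}) z_j` is a constant plus a
combination of independent centred noises; its second moment is the constant squared plus the sum
of the squared coefficients times `σ²`. For the lower bound, pair `j` with `T - j`: since
`r^j r^{T-j} = r^T`, each pair contributes at least `1 - 2 r^T`, and `r^T ≤ e^{-γLT} ≤ 1/16`,
so the sum is at least `7(T-1)/16 ≥ T/4` as soon as `T ≥ 3`.
-/

open MeasureTheory ProbabilityTheory Finset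

theorem eq_pow_mul_add_sum_of_succ_eq {R : Type*} [CommSemiring R] {r : R} {a b : ℕ → R}
    (h : ∀ t, a (t + 1) = r * a t + b (t + 1)) (t : ℕ) :
    a t = r ^ t * a 0 + ∑ j ∈ Icc 1 t, r ^ (t - j) * b j := by
  induction t with
  | zero => simp
  | succ t ih =>
    rw [h, ih, sum_Icc_succ_top (by omega), Nat.sub_self, pow_zero, one_mul, mul_add, mul_sum,
      pow_succ', mul_assoc, add_assoc]
    congr 2
    refine sum_congr rfl fun j hj => ?_
    rw [Nat.sub_add_comm (mem_Icc.mp hj).2, pow_succ', mul_assoc]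

theorem virtual_eq_pow_mul_add_sum {R : Type*} [CommRing R] {γ L : R} {z x xt : ℕ → R}
    (hrec : ∀ t, x (t + 1) = (1 - γ * L) * x t - γ * z (t + 1))
    (hvirt : ∀ t, xt (t + 1) = xt t - γ * L * x t) (h0 : xt 0 = x 0) (t : ℕ) :
    xt t = (1 - γ * L) ^ t * x 0 + ∑ j ∈ Icc 1 t, γ * (1 - (1 - γ * L) ^ (t - j)) * z j := by
  have hx := eq_pow_mul_add_sum_of_succ_eq (r := 1 - γ * L) (a := x) (b := fun j => -(γ * z j))
    (fun t => by rw [hrec]; ring) t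
  have hdiff := eq_pow_mul_add_sum_of_succ_eq (r := 1) (a := fun t => xt t - x t)
    (b := fun j => γ * z j) (fun t => by simp only [hrec, hvirt]; ring) t
  simp only [one_pow, one_mul, h0, sub_self, zero_add] at hdiff
  rw [eq_add_of_sub_eq hdiff, hx, add_comm, add_assoc, ← sum_add_distrib]
  congr 2 with j
  ring

theorem sum_Icc_one_sub_reflect {M : Type*} [AddCommMonoid M] (f : ℕ → M) (n : ℕ) :
    ∑ j ∈ Icc 1 (n - 1), f (n - j) = ∑ j ∈ Icc 1 (n - 1), f j := by
  refine sum_nbij' (n - ·) (n - ·) ?_ ?_ ?_ ?_ fun _ _ => rfl <;>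
    intro j hj <;> simp only [mem_Icc] at hj ⊢ <;> omega

theorem sum_Icc_sub_eq_sum_Icc_pred {M : Type*} [AddCommMonoid M] {f : ℕ → M} (hf : f 0 = 0)
    (n : ℕ) : ∑ j ∈ Icc 1 n, f (n - j) = ∑ j ∈ Icc 1 (n - 1), f j := by
  cases n with
  | zero => simp
  | succ n =>
    rw [sum_Icc_succ_top (by omega), Nat.sub_self, hf, add_zero, ← sum_Icc_one_sub_reflect]
    rfl

theorem integral_sq_const_add_sum {Ω ι : Type*} [MeasurableSpace Ω] {μ : Measure Ω}
    [IsProbabilityMeasure μ] {z : ι → Ω → ℝ} (hindep : iIndepFun z μ)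
    (hL2 : ∀ i, MemLp (z i) 2 μ) {s : Finset ι} (hmean : ∀ i ∈ s, μ[z i] = 0) (a : ℝ)
    (c : ι → ℝ) :
    ∫ ω, (a + ∑ i ∈ s, c i * z i ω) ^ 2 ∂μ = a ^ 2 + ∑ i ∈ s, c i ^ 2 * ∫ ω, z i ω ^ 2 ∂μ := by
  set S : Ω → ℝ := fun ω => ∑ i ∈ s, c i * z i ω
  have hcz : ∀ i, MemLp (fun ω => c i * z i ω) 2 μ := fun i => (hL2 i).const_mul (c i)
  have hS : MemLp S 2 μ := memLp_finsetSum s fun i _ => hcz i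
  have hS_mean : μ[S] = 0 := by
    rw [integral_finsetSum s fun i _ => (hcz i).integrable one_le_two]
    exact sum_eq_zero fun i hi => by rw [integral_const_mul, hmean i hi, mul_zero]
  have hS_var : Var[S; μ] = ∑ i ∈ s, c i ^ 2 * ∫ ω, z i ω ^ 2 ∂μ := by
    have hsum := IndepFun.variance_sum (s := s) (fun i _ => hcz i) fun i _ j _ hij =>
      (hindep.indepFun hij).comp (measurable_const_mul (c i)) (measurable_const_mul (c j))
    rw [sum_fn] at hsum
    rw [hsum]
    refine sum_congr rfl fun i hi => ?_
    rw [variance_const_mul,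
      variance_of_integral_eq_zero (hL2 i).aestronglyMeasurable.aemeasurable (hmean i hi)]
  have hY : MemLp (fun ω => a + S ω) 2 μ := (memLp_const a).add hS
  have hY_mean : μ[fun ω => a + S ω] = a := by
    rw [integral_add (integrable_const a) (hS.integrable one_le_two), hS_mean]
    simp
  rw [← hS_var, ← variance_const_add hS.aestronglyMeasurable a, variance_eq_sub hY, hY_mean]
  simp only [Pi.pow_apply]
  ring

theorem cast_pred_mul_le_two_mul_sum_sq_one_sub_pow (r : ℝ) (n : ℕ) :
    ((n - 1 : ℕ) : ℝ) * (1 - 2 * r ^ n) ≤ 2 * ∑ j ∈ Icc 1 (n - 1), (1 - r ^ j) ^ 2 := by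
  have hpair : ∀ j ∈ Icc 1 (n - 1), 1 - 2 * r ^ n ≤ (1 - r ^ j) ^ 2 + (1 - r ^ (n - j)) ^ 2 := by
    intro j hj
    obtain ⟨-, hjn⟩ := mem_Icc.mp hj
    have hmul : r ^ j * r ^ (n - j) = r ^ n := by
      rw [← pow_add, Nat.add_sub_cancel' (by omega)]
    nlinarith [sq_nonneg (r ^ j + r ^ (n - j) - 1)]
  have := sum_le_sum hpair
  rw [sum_const, Nat.card_Icc, Nat.add_sub_cancel, nsmul_eq_mul, sum_add_distrib,
    sum_Icc_one_sub_reflect (fun j => (1 - r ^ j) ^ 2)] at this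
  linarith

theorem one_sub_pow_le_inv_of_log_le {p c : ℝ} (hp : p ≤ 1) (hc : 0 < c) {n : ℕ}
    (h : Real.log c ≤ p * n) : (1 - p) ^ n ≤ c⁻¹ :=
  calc (1 - p) ^ n ≤ Real.exp (-p) ^ n := by
        gcongr
        exact Real.one_sub_le_exp_neg p
    _ = Real.exp (-(p * n)) := by rw [← Real.exp_nat_mul]; ring_nf
    _ ≤ Real.exp (-Real.log c) := by gcongr
    _ = c⁻¹ := by rw [Real.exp_neg, Real.exp_log hc]

theorem div_four_le_sum_sq_one_sub_pow {p : ℝ} (hp : 0 < p) (hp1 : p < 1) {n : ℕ}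
    (hn : 2 * Real.log 4 / p ≤ n) : (n : ℝ) / 4 ≤ ∑ j ∈ Icc 1 (n - 1), (1 - (1 - p) ^ j) ^ 2 := by
  have hlog : 2 * Real.log 4 ≤ p * n := by rwa [div_le_iff₀' hp] at hn
  have hlog4 : 1 < Real.log 4 := by
    rw [Real.lt_log_iff_exp_lt (by norm_num)]
    linarith [Real.exp_one_lt_d9]
  have hn3 : (3 : ℝ) ≤ n := by
    have : (2 : ℝ) < n := by nlinarith
    exact_mod_cast (show 2 < n by exact_mod_cast this)
  have hpow : (1 - p) ^ n ≤ 16⁻¹ := by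
    refine one_sub_pow_le_inv_of_log_le hp1.le (by norm_num) ?_
    rwa [show (16 : ℝ) = 4 ^ 2 by norm_num, Real.log_pow, Nat.cast_ofNat]
  have := cast_pred_mul_le_two_mul_sum_sq_one_sub_pow (1 - p) n
  rw [Nat.cast_pred (by exact_mod_cast (by linarith : (0 : ℝ) < n))] at this
  nlinarith

theorem pgd_virtual_sequence_loose_general
    {Ω : Type*} [MeasurableSpace Ω] (μ : Measure Ω) [IsProbabilityMeasure μ]
    (γ L σ : ℝ) (hγ : 0 < γ) (hL : 0 < L) (h1 : γ * L < 1)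
    (z : ℕ → Ω → ℝ)
    (hindep : iIndepFun z μ)
    (hL2 : ∀ t, MemLp (z t) 2 μ)
    (hmean : ∀ t, 1 ≤ t → ∫ ω, z t ω ∂μ = 0)
    (hvar : ∀ t, 1 ≤ t → ∫ ω, (z t ω) ^ 2 ∂μ = σ ^ 2)
    (x0 : ℝ) (x xt : ℕ → Ω → ℝ)
    (hx0 : ∀ ω, x 0 ω = x0)
    (hrec : ∀ t ω, x (t + 1) ω = (1 - γ * L) * x t ω - γ * z (t + 1) ω)
    (hxt0 : ∀ ω, xt 0 ω = x0)
    (hvirt : ∀ t ω, xt (t + 1) ω = xt t ω - γ * L * x t ω)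
    (T : ℕ) :
    ∫ ω, (xt T ω) ^ 2 ∂μ =
        (1 - γ * L) ^ (2 * T) * x0 ^ 2
          + γ ^ 2 * ∑ j ∈ Finset.Icc 1 (T - 1), (1 - (1 - γ * L) ^ j) ^ 2 * σ ^ 2 ∧
      ((T : ℝ) ≥ 2 * Real.log 4 / (γ * L) →
        γ ^ 2 * σ ^ 2 * T / 4 ≤ ∫ ω, (xt T ω) ^ 2 ∂μ) := by
  have hclosed (ω : Ω) : xt T ω = (1 - γ * L) ^ T * x0
      + ∑ j ∈ Icc 1 T, γ * (1 - (1 - γ * L) ^ (T - j)) * z j ω := by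
    rw [virtual_eq_pow_mul_add_sum (z := (z · ω)) (x := (x · ω)) (xt := (xt · ω)) (hrec · ω)
      (hvirt · ω) (by rw [hxt0, hx0]) T, hx0]
  have hsecond : ∫ ω, (xt T ω) ^ 2 ∂μ = ((1 - γ * L) ^ T * x0) ^ 2
      + ∑ j ∈ Icc 1 T, (γ * (1 - (1 - γ * L) ^ (T - j))) ^ 2 * σ ^ 2 := by
    simp only [hclosed]
    rw [integral_sq_const_add_sum hindep hL2 fun j hj => hmean j (mem_Icc.mp hj).1]
    exact congrArg _ (sum_congr rfl fun j hj => by rw [hvar j (mem_Icc.mp hj).1])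
  have heq : ∫ ω, (xt T ω) ^ 2 ∂μ = (1 - γ * L) ^ (2 * T) * x0 ^ 2
      + γ ^ 2 * ∑ j ∈ Icc 1 (T - 1), (1 - (1 - γ * L) ^ j) ^ 2 * σ ^ 2 := by
    rw [hsecond, mul_pow, ← pow_mul, mul_comm T 2, mul_sum,
      sum_Icc_sub_eq_sum_Icc_pred (f := fun j => (γ * (1 - (1 - γ * L) ^ j)) ^ 2 * σ ^ 2)
        (by simp)]
    exact congrArg _ (sum_congr rfl fun j _ => by ring)
  refine ⟨heq, fun hT => ?_⟩
  have hsum := div_four_le_sum_sq_one_sub_pow (mul_pos hγ hL) h1 hT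
  have hinit : 0 ≤ (1 - γ * L) ^ (2 * T) * x0 ^ 2 := by rw [pow_mul]; positivity
  rw [heq, ← sum_mul]
  calc γ ^ 2 * σ ^ 2 * T / 4 = γ ^ 2 * (T / 4 * σ ^ 2) := by ring
    _ ≤ γ ^ 2 * ((∑ j ∈ Icc 1 (T - 1), (1 - (1 - γ * L) ^ j) ^ 2) * σ ^ 2) := by gcongr
    _ ≤ _ := le_add_of_nonneg_left hinit

/-- The standard virtual-sequence analysis is loose for PGD: for scalar PGD iterates
`x_{t+1} = (1 − γL)x_t − γ z_{t+1}` and virtual sequence `x̃_{t+1} = x̃_t − γL x_t`,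
`x̃_0 = x_0`, one has `E[x̃_T²] = (1 − γL)^{2T} x_0² + γ² ∑_{j=1}^{T−1} (1 − (1 − γL)^j)² σ²`,
and if `T ≥ 2 log 4/(γL)` then `E[x̃_T²] ≥ γ²σ²T/4`. -/
theorem pgd_virtual_sequence_loose
    {Ω : Type*} [MeasurableSpace Ω] (μ : Measure Ω) [IsProbabilityMeasure μ]
    (γ L σ : ℝ) (hγ : 0 < γ) (hL : 0 < L) (h1 : γ * L < 1) (hσ : 0 ≤ σ)
    (z : ℕ → Ω → ℝ)
    (hmeas : ∀ t, Measurable (z t))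
    (hindep : iIndepFun z μ)
    (hL2 : ∀ t, MemLp (z t) 2 μ)
    (hmean : ∀ t, 1 ≤ t → ∫ ω, z t ω ∂μ = 0)
    (hvar : ∀ t, 1 ≤ t → ∫ ω, (z t ω) ^ 2 ∂μ = σ ^ 2)
    (x0 : ℝ) (x xt : ℕ → Ω → ℝ)
    (hx0 : ∀ ω, x 0 ω = x0)
    (hrec : ∀ t ω, x (t + 1) ω = (1 - γ * L) * x t ω - γ * z (t + 1) ω)
    (hxt0 : ∀ ω, xt 0 ω = x0)
    (hvirt : ∀ t ω, xt (t + 1) ω = xt t ω - γ * L * x t ω)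
    (T : ℕ) :
    ∫ ω, (xt T ω) ^ 2 ∂μ =
        (1 - γ * L) ^ (2 * T) * x0 ^ 2
          + γ ^ 2 * ∑ j ∈ Finset.Icc 1 (T - 1), (1 - (1 - γ * L) ^ j) ^ 2 * σ ^ 2 ∧
      ((T : ℝ) ≥ 2 * Real.log 4 / (γ * L) →
        γ ^ 2 * σ ^ 2 * T / 4 ≤ ∫ ω, (xt T ω) ^ 2 ∂μ) :=
  pgd_virtual_sequence_loose_general μ γ L σ hγ hL h1 z hindep hL2 hmean hvar x0 x xt hx0 hrec hxt0
    hvirt T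
end
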